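/- arXiv:2310.15611 — 12 statements merged into one kernel-verified Lean document; each statement's English description precedes it below -/
import Mathlib

section
/- Let k be any field, R = k[x_1,…,x_n], 1 ≤ i < j ≤ n, and I = (x_1^2,…,x_n^2) + RLex(x_i x_j). Then the Hilbert series of A = R/I is HS(A;t) = (1+t)^{n−j} (1 + j·t + (j−i−1)·t^2). -/
open MvPolynomial

/-- The degree-`m` graded piece of the quotient `R/I`, as the image of the
homogeneous polynomials of degree `m`. -/
noncomputable def quotPiece {n : ℕ} (k : Type*) [Field k]
    (I : Ideal (MvPolynomial (Fin n) k)) (m : ℕ) :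
    Submodule k (MvPolynomial (Fin n) k ⧸ I) :=
  (MvPolynomial.homogeneousSubmodule (Fin n) k m).map (Ideal.Quotient.mkₐ k I).toLinearMap

/-- The ideal `(x_1^2, …, x_n^2)` generated by the squares of all variables. -/
noncomputable def squaresIdeal (k : Type*) [Field k] (n : ℕ) : Ideal (MvPolynomial (Fin n) k) :=
  Ideal.span (Set.range fun a : Fin n => MvPolynomial.X a ^ 2)

/-- `RLex(x_i x_j)`: the ideal generated by all squarefree quadratic monomials
`x_k x_l` (`k < l`) which are `≥ x_i x_j` in the reverse lexicographic order
with `x_1 > ⋯ > x_n`, i.e. those with `l < j`, or `l = j` and `k ≤ i`.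
Variables are `1`-indexed: `x_m` corresponds to `X ⟨m-1⟩`. -/
noncomputable def RLexIdeal (k : Type*) [Field k] (n i j : ℕ) : Ideal (MvPolynomial (Fin n) k) :=
  Ideal.span { f | ∃ a b : Fin n, a < b ∧
    ((b : ℕ) + 1 < j ∨ ((b : ℕ) + 1 = j ∧ (a : ℕ) + 1 ≤ i)) ∧
    f = MvPolynomial.X a * MvPolynomial.X b }

/-!
The monomials outside a monomial ideal `I` form a basis of `R/I`. Since `I` contains every
square, its standard monomials are the squarefree `x^S`, and `x^S ∉ I` exactly when `S` is an
independent set of the graph whose edges are the generators `x_k x_l` of `RLex(x_i x_j)`. So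
`HF(A, m)` is the number of independent `m`-sets, i.e. the `t^m`-coefficient of the independence
polynomial. In this graph `x_1, …, x_{j-1}` form a clique, `x_j` is joined to `x_1, …, x_i`, and
`x_{j+1}, …, x_n` are isolated, so the polynomial is
`(1 + (j-1) t + t (1 + (j-1-i) t)) (1 + t)^{n-j}`.
-/

open Finset
open scoped Polynomial

section StandardMonomials

variable {k : Type*} [Field k] {n : ℕ}

theorem finrank_quotPiece_span_monomial (G : Set (Fin n →₀ ℕ)) (m : ℕ)
    (B : Finset (Fin n →₀ ℕ)) (hB : ∀ d, d ∈ B ↔ d.degree = m ∧ ∀ g ∈ G, ¬ g ≤ d) :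
    Module.finrank k (quotPiece k (Ideal.span ((monomial · (1 : k)) '' G)) m) = #B := by
  set I := Ideal.span ((monomial · (1 : k)) '' G)
  set π := (Ideal.Quotient.mkₐ k I).toLinearMap
  have hπ : ∀ f, π f = 0 ↔ ∀ d ∈ f.support, ∃ g ∈ G, g ≤ d := fun f =>
    Ideal.Quotient.eq_zero_iff_mem.trans mem_ideal_span_monomial_image
  have hpiece : quotPiece k I m = (restrictSupport k (B : Set (Fin n →₀ ℕ))).map π := by
    rw [quotPiece, homogeneousSubmodule_eq_finsupp_supported]
    change (restrictSupport k _).map π = _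
    refine le_antisymm ?_ (Submodule.map_mono (restrictSupport_mono k fun d hd => ((hB d).mp hd).1))
    rw [Submodule.map_le_iff_le_comap, restrictSupport_eq_span, Submodule.span_le]
    rintro _ ⟨d, hd, rfl⟩
    by_cases hdB : d ∈ B
    · exact Submodule.mem_map_of_mem ((monomial_mem_restrictSupport k).mpr (Or.inl hdB))
    · have : π (monomial d 1) = 0 := by
        classical
        rw [hπ, support_monomial, if_neg one_ne_zero]
        simpa [hB, hd.out] using hdB
      exact Submodule.mem_comap.mpr (this ▸ Submodule.zero_mem _)
  have hdisj : Disjoint (restrictSupport k (B : Set (Fin n →₀ ℕ))) (LinearMap.ker π) := by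
    refine Submodule.disjoint_def.mpr fun f hfB hfI => support_eq_empty.mp ?_
    refine Finset.eq_empty_of_forall_notMem fun d hd => ?_
    obtain ⟨g, hg, hgd⟩ := (hπ f).mp hfI d hd
    exact ((hB d).mp (hfB hd)).2 g hg hgd
  rw [hpiece, ← LinearMap.range_domRestrict,
    LinearMap.finrank_range_of_inj (LinearMap.injective_domRestrict_iff.mpr hdisj),
    Module.finrank_eq_card_basis (basisRestrictSupport k _)]
  simp

end StandardMonomials

section IndependencePolynomial

variable {α : Type*} (r : α → α → Prop)

def IsIndep (L : Finset α) : Prop := Set.Pairwise ↑L (¬ r · ·)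

variable [DecidableEq α] [DecidableRel r]

instance : DecidablePred (IsIndep r) := fun L => by unfold IsIndep; infer_instance

noncomputable def indepPolyOn (s : Finset α) : ℕ[X] :=
  ∑ L ∈ s.powerset with IsIndep r L, Polynomial.X ^ #L

theorem coeff_indepPolyOn (s : Finset α) (m : ℕ) :
    (indepPolyOn r s).coeff m = #{L ∈ s.powerset | IsIndep r L ∧ #L = m} := by
  simp [indepPolyOn, Polynomial.finsetSum_coeff, Polynomial.coeff_X_pow, sum_boole,
    filter_filter, eq_comm]

@[simp]
theorem indepPolyOn_empty : indepPolyOn r ∅ = 1 := by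
  rw [indepPolyOn, powerset_empty, sum_filter, sum_singleton, if_pos (by simp [IsIndep])]
  simp

theorem isIndep_insert_iff {a : α} {s L : Finset α} (ha : a ∉ s) (hL : L ⊆ s) :
    IsIndep r (insert a L) ↔ IsIndep r L ∧ L ⊆ {b ∈ s | ¬ r a b ∧ ¬ r b a} := by
  rw [IsIndep, coe_insert, Set.pairwise_insert_of_notMem fun h => ha (hL h)]
  simp only [subset_iff, mem_filter, mem_coe]
  exact and_congr_right fun _ => forall₂_congr fun b hb => by simp [hL hb]

theorem indepPolyOn_insert {a : α} {s : Finset α} (ha : a ∉ s) :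
    indepPolyOn r (insert a s) =
      indepPolyOn r s + Polynomial.X * indepPolyOn r {b ∈ s | ¬ r a b ∧ ¬ r b a} := by
  have hFs : {b ∈ s | ¬ r a b ∧ ¬ r b a} ⊆ s := filter_subset _ s
  simp only [indepPolyOn, sum_filter, sum_powerset_insert ha, mul_sum]
  congr 1
  rw [← sum_subset (powerset_mono.mpr hFs)]
  · refine sum_congr rfl fun L hL => ?_
    have hLs := (mem_powerset.mp hL).trans hFs
    simp only [isIndep_insert_iff r ha hLs, mem_powerset.mp hL, and_true,
      card_insert_of_notMem fun h => ha (hLs h), pow_succ', mul_ite, mul_zero]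
  · intro L hL hLF
    simp only [isIndep_insert_iff r ha (mem_powerset.mp hL)]
    exact if_neg fun h => hLF (mem_powerset.mpr h.2)

theorem indepPolyOn_of_pairwise {s : Finset α}
    (hs : (s : Set α).Pairwise fun a b => r a b ∨ r b a) :
    indepPolyOn r s = 1 + (#s : ℕ[X]) * Polynomial.X := by
  induction s using Finset.induction_on with
  | empty => simp
  | insert a s ha ih =>
    rw [coe_insert, Set.pairwise_insert_of_notMem ha] at hs
    have hadj : {b ∈ s | ¬ r a b ∧ ¬ r b a} = ∅ :=
      filter_eq_empty_iff.mpr fun b hb => by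
        have := hs.2 b hb
        tauto
    rw [indepPolyOn_insert r ha, hadj, indepPolyOn_empty, ih hs.1, card_insert_of_notMem ha]
    push_cast
    ring

theorem indepPolyOn_union_of_isolated {s u : Finset α} (hsu : Disjoint s u)
    (hu : ∀ a ∈ u, ∀ b, ¬ r a b ∧ ¬ r b a) :
    indepPolyOn r (s ∪ u) = indepPolyOn r s * (1 + Polynomial.X) ^ #u := by
  induction u using Finset.induction_on with
  | empty => simp
  | insert a u ha ih =>
    rw [disjoint_insert_right] at hsu
    have has : a ∉ s ∪ u := by simp [hsu.1, ha]
    have hnbhd : {b ∈ s ∪ u | ¬ r a b ∧ ¬ r b a} = s ∪ u :=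
      filter_true_of_mem fun b _ => hu a (mem_insert_self a u) b
    rw [union_insert, indepPolyOn_insert r has, hnbhd,
      ih hsu.2 fun b hb => hu b (mem_insert_of_mem hb), card_insert_of_notMem ha]
    ring

end IndependencePolynomial

section SquarefreeExponents

variable {α : Type*}

noncomputable def squarefreeExp (S : Finset α) : α →₀ ℕ := ∑ a ∈ S, Finsupp.single a 1

theorem degree_squarefreeExp (S : Finset α) : (squarefreeExp S).degree = #S := by
  simp [squarefreeExp, map_sum, Finsupp.degree_single]

variable [DecidableEq α]

theorem squarefreeExp_apply (S : Finset α) (a : α) :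
    squarefreeExp S a = if a ∈ S then 1 else 0 := by
  simp [squarefreeExp, Finsupp.finsetSum_apply, Finsupp.single_apply]

theorem support_squarefreeExp (S : Finset α) : (squarefreeExp S).support = S := by
  ext a
  simp [squarefreeExp_apply]

theorem squarefreeExp_support {d : α →₀ ℕ} (hd : ∀ a, d a ≤ 1) : squarefreeExp d.support = d := by
  ext a
  have := hd a
  rw [squarefreeExp_apply]
  split_ifs with ha
  · rw [Finsupp.mem_support_iff] at ha
    omega
  · exact (Finsupp.notMem_support_iff.mp ha).symm

theorem squarefreeExp_le_iff {S : Finset α} {d : α →₀ ℕ} : squarefreeExp S ≤ d ↔ S ⊆ d.support := by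
  simp only [Finsupp.le_def, squarefreeExp_apply, subset_iff, Finsupp.mem_support_iff]
  refine forall_congr' fun a => ?_
  split_ifs <;> simp [*, Nat.one_le_iff_ne_zero]

theorem squarefreeExp_pair {a b : α} (hab : a ≠ b) :
    squarefreeExp {a, b} = Finsupp.single a 1 + Finsupp.single b 1 :=
  sum_pair hab

variable (r : α → α → Prop)

def quadraticExps : Set (α →₀ ℕ) :=
  Set.range (Finsupp.single · 2) ∪ {g | ∃ a b, r a b ∧ g = Finsupp.single a 1 + Finsupp.single b 1}

theorem forall_quadraticExps_not_le_iff (d : α →₀ ℕ) :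
    (∀ g ∈ quadraticExps r, ¬ g ≤ d) ↔ (∀ a, d a ≤ 1) ∧ IsIndep r d.support := by
  have hsq : ∀ a, ¬ Finsupp.single a 2 ≤ d ↔ d a ≤ 1 := fun a => by
    rw [Finsupp.single_le_iff]
    omega
  simp only [quadraticExps, Set.mem_union, Set.mem_range, Set.mem_ofPred_eq, or_imp, forall_and,
    forall_exists_index, forall_apply_eq_imp_iff, hsq]
  refine and_congr_right fun hle => ⟨fun h a ha b hb hab hr => h _ a b ⟨hr, rfl⟩ ?_,
    fun h g a b ⟨hr, hg⟩ hgd => ?_⟩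
  · rw [← squarefreeExp_pair hab, squarefreeExp_le_iff]
    exact insert_subset ha (singleton_subset_iff.mpr hb)
  · subst hg
    by_cases hab : a = b
    · subst hab
      rw [← Finsupp.single_add, Finsupp.single_le_iff] at hgd
      exact absurd (hle a) (by omega)
    · rw [← squarefreeExp_pair hab, squarefreeExp_le_iff, insert_subset_iff,
        singleton_subset_iff] at hgd
      exact h (mem_coe.mpr hgd.1) (mem_coe.mpr hgd.2) hab hr

end SquarefreeExponents

section SquaresAndEdges

variable {k : Type*} [Field k] {n : ℕ} (r : Fin n → Fin n → Prop)

theorem squaresIdeal_add_span_X_mul_X :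
    squaresIdeal k n + Ideal.span {f | ∃ a b, r a b ∧ f = X a * X b} =
      Ideal.span ((monomial · (1 : k)) '' quadraticExps r) := by
  rw [squaresIdeal, quadraticExps, Submodule.add_eq_sup, ← Ideal.span_union, Set.image_union]
  congr 2 <;> ext f
  · simp [X_pow_eq_monomial]
  · simp [X, monomial_mul, eq_comm]

theorem finrank_quotPiece_squaresIdeal_add_span_X_mul_X [DecidableRel r] (m : ℕ) :
    Module.finrank k
        (quotPiece k (squaresIdeal k n + Ideal.span {f | ∃ a b, r a b ∧ f = X a * X b}) m) =
      #{S : Finset (Fin n) | IsIndep r S ∧ #S = m} := by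
  have hinj : Function.Injective (squarefreeExp : Finset (Fin n) → Fin n →₀ ℕ) :=
    fun S T h => by rw [← support_squarefreeExp S, h, support_squarefreeExp]
  rw [squaresIdeal_add_span_X_mul_X, finrank_quotPiece_span_monomial _ m
    ((univ.filter fun S : Finset (Fin n) => IsIndep r S ∧ #S = m).map ⟨squarefreeExp, hinj⟩),
    card_map]
  intro d
  rw [forall_quadraticExps_not_le_iff]
  simp only [mem_map, mem_filter, mem_univ, true_and, Function.Embedding.coeFn_mk]
  constructor
  · rintro ⟨S, ⟨hS, rfl⟩, rfl⟩
    refine ⟨degree_squarefreeExp S, fun a => ?_, by rwa [support_squarefreeExp]⟩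
    rw [squarefreeExp_apply]
    split_ifs <;> omega
  · rintro ⟨hdeg, hsq, hind⟩
    refine ⟨d.support, ⟨hind, ?_⟩, squarefreeExp_support hsq⟩
    rw [← degree_squarefreeExp, squarefreeExp_support hsq, hdeg]

end SquaresAndEdges

section RLex

variable {n : ℕ}

def rlexRel (i j : ℕ) (a b : Fin n) : Prop :=
  a < b ∧ ((b : ℕ) + 1 < j ∨ ((b : ℕ) + 1 = j ∧ (a : ℕ) + 1 ≤ i))

instance (i j : ℕ) : DecidableRel (rlexRel (n := n) i j) := fun a b => by
  unfold rlexRel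
  infer_instance

theorem RLexIdeal_eq_span (k : Type*) [Field k] (i j : ℕ) :
    RLexIdeal k n i j = Ideal.span {f | ∃ a b, rlexRel i j a b ∧ f = X a * X b} := by
  simp only [RLexIdeal, rlexRel, and_assoc]

theorem card_filter_le_val_lt (l u : ℕ) (hu : u ≤ n) :
    #{a : Fin n | l ≤ (a : ℕ) ∧ (a : ℕ) < u} = u - l := by
  rw [← card_map Fin.valEmbedding, ← Nat.card_Ico]
  congr 1
  ext x
  simp only [mem_map, mem_filter, mem_univ, true_and, Fin.valEmbedding_apply, mem_Ico]
  exact ⟨by rintro ⟨a, h, rfl⟩; exact h, fun h => ⟨⟨x, by omega⟩, h, rfl⟩⟩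

theorem indepPolyOn_univ_rlexRel {i j : ℕ} (hij : i < j) (hjn : j ≤ n) :
    indepPolyOn (rlexRel (n := n) i j) univ =
      (1 + Polynomial.X) ^ (n - j) *
        (1 + Polynomial.C j * Polynomial.X + Polynomial.C (j - i - 1) * Polynomial.X ^ 2) := by
  set r := rlexRel (n := n) i j
  -- With 0-based indices, `top` is `x_j` and `clique` is `{x_1, …, x_{j-1}}`.
  set top : Fin n := ⟨j - 1, by omega⟩
  set clique : Finset (Fin n) := {a | (a : ℕ) < j - 1}
  have hclique : (clique : Set (Fin n)).Pairwise fun a b => r a b ∨ r b a := by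
    intro a ha b hb hab
    simp only [clique, coe_filter, mem_univ, true_and, Set.mem_ofPred_eq] at ha hb
    rcases lt_or_gt_of_ne hab with h | h
    · exact Or.inl ⟨h, Or.inl (by omega)⟩
    · exact Or.inr ⟨h, Or.inl (by omega)⟩
  have htop : top ∉ clique := by simp [clique, top]
  have hnbhd : {b ∈ clique | ¬ r top b ∧ ¬ r b top} =
      ({a | i ≤ (a : ℕ) ∧ (a : ℕ) < j - 1} : Finset (Fin n)) := by
    ext a
    simp only [clique, r, top, rlexRel, mem_filter, mem_univ, true_and, Fin.lt_def]
    omega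
  have hiso : ∀ a ∈ (insert top clique)ᶜ, ∀ b, ¬ r a b ∧ ¬ r b a := by
    intro a ha b
    simp only [clique, top, mem_compl, mem_insert, mem_filter, mem_univ, true_and,
      Fin.ext_iff] at ha
    simp only [r, rlexRel, Fin.lt_def]
    omega
  rw [← union_compl (insert top clique),
    indepPolyOn_union_of_isolated r disjoint_compl_right hiso, indepPolyOn_insert r htop,
    indepPolyOn_of_pairwise r hclique,
    indepPolyOn_of_pairwise r (hclique.mono (coe_subset.mpr (filter_subset _ _))), hnbhd,
    card_compl, card_insert_of_notMem htop, Fin.card_filter_val_lt,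
    card_filter_le_val_lt _ _ (by omega), min_eq_right (by omega), Fintype.card_fin]
  obtain ⟨j, rfl⟩ : ∃ j', j = j' + 1 := ⟨j - 1, by omega⟩
  have hCnat : ∀ m : ℕ, Polynomial.C m = (m : ℕ[X]) := Polynomial.C_eq_natCast
  rw [Nat.add_sub_cancel, show j + 1 - i - 1 = j - i by omega, hCnat, hCnat]
  push_cast
  ring

end RLex

theorem stmt1_general (k : Type*) [Field k] (n i j : ℕ) (hij : i < j) (hjn : j ≤ n)
    (I : Ideal (MvPolynomial (Fin n) k))
    (hI : I = squaresIdeal k n + RLexIdeal k n i j) :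
    ∀ m : ℕ, Module.finrank k (quotPiece k I m) =
      ((1 + Polynomial.X) ^ (n - j) *
        (1 + Polynomial.C j * Polynomial.X
          + Polynomial.C (j - i - 1) * Polynomial.X ^ 2) : Polynomial ℕ).coeff m := by
  intro m
  rw [hI, RLexIdeal_eq_span, finrank_quotPiece_squaresIdeal_add_span_X_mul_X,
    ← indepPolyOn_univ_rlexRel hij hjn, coeff_indepPolyOn, powerset_univ]

/-- The Hilbert series of `A = R/I` for `I = (x_1^2, …, x_n^2) + RLex(x_i x_j)` is
`(1+t)^{n-j} (1 + j·t + (j-i-1)·t^2)`. -/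
theorem stmt1 (k : Type*) [Field k] (n i j : ℕ) (hi : 1 ≤ i) (hij : i < j) (hjn : j ≤ n)
    (I : Ideal (MvPolynomial (Fin n) k))
    (hI : I = squaresIdeal k n + RLexIdeal k n i j) :
    ∀ m : ℕ, Module.finrank k (quotPiece k I m) =
      ((1 + Polynomial.X) ^ (n - j) *
        (1 + Polynomial.C j * Polynomial.X
          + Polynomial.C (j - i - 1) * Polynomial.X ^ 2) : Polynomial ℕ).coeff m :=
  stmt1_general k n i j hij hjn I hI
end

section
/- For any integers 1 ≤ i < j ≤ n, the polynomial (1+t)^{n−j} (1 + j·t + (j−i−1)·t^2) with real coefficients has only real roots; consequently its coefficient sequence is unimodal and log-concave. -/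
open MvPolynomial

/-! The quadratic factor has discriminant `j² - 4(j-i-1) ≥ 0`, so it splits over `ℝ`, and so does
the product. Its coefficients `1, j, j-i-1` are positive up to the degree and log-concave, and
multiplication by `1 + t` preserves both properties: for `b_k = a_k + a_{k-1}` the inequality
`b_k b_{k+2} ≤ b_{k+1}²` is the sum of two log-concavity inequalities for `a` and of
`a_k a_{k+3} ≤ a_{k+1} a_{k+2}`, their product divided by `a_{k+1} a_{k+2}`, which is legitimate
because a positive sequence has no internal zeros. Finally, once a positive log-concave sequence
stops increasing it never increases again, hence it is unimodal. -/

theorem exists_unimodal_of_succ_le_imp {α : Type*} [LinearOrder α] {f : ℕ → α} {N : ℕ}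
    (hN : f (N + 1) ≤ f N) (hf : ∀ k, f (k + 1) ≤ f k → f (k + 2) ≤ f (k + 1)) :
    ∃ m ≤ N, (∀ a b : ℕ, a ≤ b → b ≤ m → f a ≤ f b) ∧
      (∀ a b : ℕ, m ≤ a → a ≤ b → f b ≤ f a) := by
  have hex : ∃ k, f (k + 1) ≤ f k := ⟨N, hN⟩
  set m := Nat.find hex
  have hup : Monotone fun k ↦ f (min k m) := by
    refine monotone_nat_of_le_succ fun k ↦ ?_
    rcases lt_or_ge k m with hk | hk
    · rw [min_eq_left hk.le, min_eq_left hk]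
      exact (lt_of_not_ge (Nat.find_min hex hk)).le
    · rw [min_eq_right hk, min_eq_right (hk.trans k.le_succ)]
  have hdown : ∀ k ≥ m, f (k + 1) ≤ f k := fun k hk ↦ by
    induction k, hk using Nat.le_induction with
    | base => exact Nat.find_spec hex
    | succ k _ ih => exact hf k ih
  refine ⟨m, Nat.find_min' hex hN, fun a b hab hbm ↦ ?_, fun a b ha hab ↦
    antitoneOn_nat_Ici_of_succ_le hdown ha (ha.trans hab) hab⟩
  simpa [min_eq_left hbm, min_eq_left (hab.trans hbm)] using hup hab

namespace Polynomial

theorem Splits.of_natDegree_le_two_of_isRoot {K : Type*} [Field K] {f : K[X]}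
    (hf : f.natDegree ≤ 2) {x : K} (hx : f.IsRoot x) : f.Splits := by
  rw [← mul_divByMonic_eq_iff_isRoot.2 hx, splits_X_sub_C_mul_iff]
  refine Splits.of_natDegree_le_one ?_
  rw [natDegree_divByMonic _ (monic_X_sub_C x), natDegree_X_sub_C]
  omega

theorem splits_quadratic_of_discrim_eq_mul_self {K : Type*} [Field K] [NeZero (2 : K)]
    {a b c s : K} (h : discrim a b c = s * s) : (C a * X ^ 2 + C b * X + C c).Splits := by
  rcases eq_or_ne a 0 with rfl | ha
  · exact Splits.of_natDegree_le_one (by simp only [C_0, zero_mul, zero_add]; compute_degree)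
  obtain ⟨x, hx⟩ := exists_quadratic_eq_zero ha ⟨s, h⟩
  refine Splits.of_natDegree_le_two_of_isRoot (x := x) (by compute_degree) ?_
  simp only [IsRoot, eval_add, eval_mul, eval_C, eval_pow, eval_X]
  linear_combination hx

theorem splits_one_add_C_mul_X_add_C_mul_X_sq {b c : ℝ} (h : 4 * c ≤ b ^ 2) :
    (1 + C b * X + C c * X ^ 2).Splits := by
  have hdisc : discrim c b 1 = √(b ^ 2 - 4 * c) * √(b ^ 2 - 4 * c) := by
    rw [Real.mul_self_sqrt (by linarith), discrim]
    ring
  rw [show (1 : ℝ[X]) + C b * X + C c * X ^ 2 = C c * X ^ 2 + C b * X + C 1 by rw [C_1]; ring]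
  exact splits_quadratic_of_discrim_eq_mul_self hdisc

theorem coeff_one_add_X_mul_zero {R : Type*} [Semiring R] (p : R[X]) :
    ((1 + X) * p).coeff 0 = p.coeff 0 := by
  simp

theorem coeff_one_add_X_mul_succ {R : Type*} [Semiring R] (p : R[X]) (k : ℕ) :
    ((1 + X) * p).coeff (k + 1) = p.coeff (k + 1) + p.coeff k := by
  rw [add_mul, one_mul, coeff_add, coeff_X_mul]

structure PosLogConcave (p : ℝ[X]) : Prop where
  coeff_pos : ∀ k ≤ p.natDegree, 0 < p.coeff k
  log_concave : ∀ k, p.coeff k * p.coeff (k + 2) ≤ p.coeff (k + 1) ^ 2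

namespace PosLogConcave

variable {p : ℝ[X]}

theorem coeff_nonneg (hp : PosLogConcave p) (k : ℕ) : 0 ≤ p.coeff k := by
  rcases le_or_gt k p.natDegree with hk | hk
  · exact (hp.coeff_pos k hk).le
  · rw [coeff_eq_zero_of_natDegree_lt hk]

theorem coeff_pos_of_le (hp : PosLogConcave p) {k l : ℕ} (hkl : k ≤ l) (hl : p.coeff l ≠ 0) :
    0 < p.coeff k :=
  hp.coeff_pos k (hkl.trans (le_natDegree_of_ne_zero hl))

theorem coeff_mul_coeff_add_three_le (hp : PosLogConcave p) (k : ℕ) :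
    p.coeff k * p.coeff (k + 3) ≤ p.coeff (k + 1) * p.coeff (k + 2) := by
  rcases eq_or_ne (p.coeff (k + 3)) 0 with h3 | h3
  · rw [h3, mul_zero]
    exact mul_nonneg (hp.coeff_nonneg _) (hp.coeff_nonneg _)
  have h12 : 0 < p.coeff (k + 1) * p.coeff (k + 2) :=
    mul_pos (hp.coeff_pos_of_le (by omega) h3) (hp.coeff_pos_of_le (by omega) h3)
  have := mul_le_mul (hp.log_concave k) (hp.log_concave (k + 1))
    (mul_nonneg (hp.coeff_nonneg _) (hp.coeff_nonneg _)) (sq_nonneg _)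
  refine le_of_mul_le_mul_right ?_ h12
  linear_combination this

theorem coeff_add_two_le_of_coeff_succ_le (hp : PosLogConcave p) {k : ℕ}
    (hk : p.coeff (k + 1) ≤ p.coeff k) :
    p.coeff (k + 2) ≤ p.coeff (k + 1) := by
  rcases eq_or_ne (p.coeff (k + 2)) 0 with h2 | h2
  · exact h2 ▸ hp.coeff_nonneg _
  refine le_of_mul_le_mul_left ?_ (hp.coeff_pos_of_le (Nat.le_add_right k 2) h2)
  nlinarith [hp.log_concave k, hp.coeff_nonneg (k + 1)]

theorem exists_unimodal (hp : PosLogConcave p) : ∃ m ≤ p.natDegree,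
    (∀ a b : ℕ, a ≤ b → b ≤ m → p.coeff a ≤ p.coeff b) ∧
    (∀ a b : ℕ, m ≤ a → a ≤ b → p.coeff b ≤ p.coeff a) := by
  refine exists_unimodal_of_succ_le_imp ?_ fun k ↦ hp.coeff_add_two_le_of_coeff_succ_le
  rw [coeff_eq_zero_of_natDegree_lt (Nat.lt_succ_self _)]
  exact hp.coeff_nonneg _

theorem one_add_X_mul (hp : PosLogConcave p) : PosLogConcave ((1 + X) * p) := by
  have hp0 : p ≠ 0 := fun h ↦ by simpa [h] using hp.coeff_pos 0 p.natDegree.zero_le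
  have hdeg : ((1 + X) * p).natDegree = p.natDegree + 1 := by
    have h1 : (1 + X : ℝ[X]).natDegree = 1 := by compute_degree!
    rw [natDegree_mul (ne_zero_of_natDegree_gt (h1 ▸ zero_lt_one)) hp0, h1, add_comm]
  refine ⟨fun k hk ↦ ?_, fun k ↦ ?_⟩
  · rcases k with _ | k
    · rw [coeff_one_add_X_mul_zero]
      exact hp.coeff_pos 0 p.natDegree.zero_le
    · rw [coeff_one_add_X_mul_succ]
      exact add_pos_of_nonneg_of_pos (hp.coeff_nonneg _) (hp.coeff_pos k (by omega))
  · rcases k with _ | k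
    · simp only [coeff_one_add_X_mul_zero, coeff_one_add_X_mul_succ]
      nlinarith [hp.log_concave 0, hp.coeff_nonneg 0, hp.coeff_nonneg 1]
    · simp only [coeff_one_add_X_mul_succ]
      nlinarith [hp.log_concave k, hp.log_concave (k + 1), hp.coeff_mul_coeff_add_three_le k]

theorem one_add_X_pow_mul (hp : PosLogConcave p) (N : ℕ) : PosLogConcave ((1 + X) ^ N * p) := by
  induction N with
  | zero => simpa using hp
  | succ N ih => simpa only [pow_succ', mul_assoc] using ih.one_add_X_mul

end PosLogConcave

theorem posLogConcave_one_add_C_mul_X_add_C_mul_X_sq {b c : ℝ} (hb : 0 < b) (hc : 0 ≤ c)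
    (hcb : c ≤ b ^ 2) : PosLogConcave (1 + C b * X + C c * X ^ 2) := by
  have hdeg : (1 + C b * X + C c * X ^ 2).natDegree ≤ 2 := by compute_degree
  set q : ℝ[X] := 1 + C b * X + C c * X ^ 2
  have hq0 : q.coeff 0 = 1 := by simp [q, coeff_one]
  have hq1 : q.coeff 1 = b := by simp [q, coeff_one]
  have hq2 : q.coeff 2 = c := by simp [q, coeff_one]
  have hq3 : ∀ k, q.coeff (k + 3) = 0 := fun k ↦ by simp [q, coeff_one]
  refine ⟨fun k hk ↦ ?_, fun k ↦ ?_⟩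
  · have hk2 := hk.trans hdeg
    interval_cases k
    · simp [hq0]
    · simpa [hq1]
    · have hq : q ≠ 0 := fun h ↦ by simp [h] at hq0
      have hlead : q.coeff 2 ≠ 0 := le_antisymm hdeg hk ▸ leadingCoeff_ne_zero.2 hq
      exact hq2 ▸ hc.lt_of_ne (hq2 ▸ hlead).symm
  · match k with
    | 0 => simpa [hq0, hq1, hq2]
    | 1 => rw [hq3 0, mul_zero]; positivity
    | k + 2 => rw [hq3 k, hq3 (k + 1), mul_zero]; positivity

end Polynomial

theorem stmt2_general (n i j : ℕ) (hij : i < j)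
    (p : Polynomial ℝ)
    (hp : p = (1 + Polynomial.X) ^ (n - j) *
      (1 + Polynomial.C (j : ℝ) * Polynomial.X
        + Polynomial.C ((j - i - 1 : ℕ) : ℝ) * Polynomial.X ^ 2)) :
    p.Splits ∧
    (∃ m ≤ p.natDegree,
      (∀ a b : ℕ, a ≤ b → b ≤ m → p.coeff a ≤ p.coeff b) ∧
      (∀ a b : ℕ, m ≤ a → a ≤ b → p.coeff b ≤ p.coeff a)) ∧
    (∀ m : ℕ, 0 < m → p.coeff (m - 1) * p.coeff (m + 1) ≤ p.coeff m ^ 2) := by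
  have hj : (0 : ℝ) < j := by exact_mod_cast hij.pos
  have hc : (0 : ℝ) ≤ (j - i - 1 : ℕ) := Nat.cast_nonneg _
  have hcj : ((j - i - 1 : ℕ) : ℝ) + 1 ≤ j := by exact_mod_cast (by omega : j - i - 1 + 1 ≤ j)
  have hdisc : 4 * ((j - i - 1 : ℕ) : ℝ) ≤ (j : ℝ) ^ 2 := by nlinarith [sq_nonneg ((j : ℝ) - 2)]
  have hquad := Polynomial.posLogConcave_one_add_C_mul_X_add_C_mul_X_sq hj hc (by nlinarith)
  have hlc : p.PosLogConcave := hp ▸ hquad.one_add_X_pow_mul (n - j)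
  refine ⟨?_, hlc.exists_unimodal, fun m hm ↦ ?_⟩
  · have hlin : (1 + Polynomial.X : Polynomial ℝ).natDegree ≤ 1 := by compute_degree
    rw [hp]
    exact ((Polynomial.Splits.of_natDegree_le_one hlin).pow _).mul
      (Polynomial.splits_one_add_C_mul_X_add_C_mul_X_sq hdisc)
  · obtain ⟨k, rfl⟩ := Nat.exists_eq_add_one_of_ne_zero hm.ne'
    simpa using hlc.log_concave k

/-- The polynomial `(1+t)^{n-j} (1 + j·t + (j-i-1)·t^2)` over `ℝ` has only real
roots (it splits over `ℝ`); consequently its coefficient sequence is unimodal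
and log-concave. -/
theorem stmt2 (n i j : ℕ) (hi : 1 ≤ i) (hij : i < j) (hjn : j ≤ n)
    (p : Polynomial ℝ)
    (hp : p = (1 + Polynomial.X) ^ (n - j) *
      (1 + Polynomial.C (j : ℝ) * Polynomial.X
        + Polynomial.C ((j - i - 1 : ℕ) : ℝ) * Polynomial.X ^ 2)) :
    p.Splits ∧
    (∃ m ≤ p.natDegree,
      (∀ a b : ℕ, a ≤ b → b ≤ m → p.coeff a ≤ p.coeff b) ∧
      (∀ a b : ℕ, m ≤ a → a ≤ b → p.coeff b ≤ p.coeff a)) ∧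
    (∀ m : ℕ, 0 < m → p.coeff (m - 1) * p.coeff (m + 1) ≤ p.coeff m ^ 2) :=
  stmt2_general n i j hij p hp
end

section
/- Let 1 ≤ i < j ≤ n and let p(t) = (1+t)^{n−j}(1 + j·t + (j−i−1)·t^2), a polynomial of degree D with coefficients h_0,…,h_D. Then p is symmetric (i.e., h_m = h_{D−m} for all 0 ≤ m ≤ D) if and only if j − i − 1 = 1. -/
/-!
Symmetry of the coefficient sequence means `p.reverse = p`. Over `ℕ` reversal is
multiplicative and fixes `1 + t`, which is cancellable, so `p` is symmetric iff the quadratic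
factor `q = 1 + j t + c t²` is. Symmetry of `q` forces its constant term `1` to equal its leading
coefficient, which is `c` when `c ≠ 0` and `j ≥ 2` when `c = 0`; conversely `1 + j t + t²` is
visibly symmetric.
-/

namespace Polynomial

variable {R : Type*} [Semiring R]

theorem reverse_eq_self_iff {p : R[X]} :
    p.reverse = p ↔ ∀ m ≤ p.natDegree, p.coeff m = p.coeff (p.natDegree - m) := by
  refine ⟨fun h m hm => ?_, fun h => ext fun m => ?_⟩
  · rw [← revAt_le hm, ← coeff_reverse, h]
  · rw [coeff_reverse]
    rcases le_or_gt m p.natDegree with hm | hm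
    · rw [revAt_le hm, h m hm]
    · rw [revAt_eq_self_of_lt hm]

theorem reverse_pow_of_domain [NoZeroDivisors R] (p : R[X]) (k : ℕ) :
    (p ^ k).reverse = p.reverse ^ k := by
  induction k with
  | zero => simpa using reverse_C (1 : R)
  | succ k ih => rw [pow_succ, reverse_mul_of_domain, ih, pow_succ]

theorem reverse_X : (X : R[X]).reverse = 1 := by
  rw [← one_mul X, reverse_mul_X, ← C_1, reverse_C]

theorem reverse_one_add_X : ((1 : R[X]) + X).reverse = 1 + X := by
  nontriviality R
  rw [add_comm, ← C_1, reverse_add_C, natDegree_X, reverse_X, C_1, one_mul, pow_one, add_comm]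

theorem reverse_one_add_C_mul_X_add_X_sq (a : R) :
    (1 + C a * X + X ^ 2 : R[X]).reverse = 1 + C a * X + X ^ 2 := by
  nontriviality R
  have h : (1 + C a * X + X ^ 2 : R[X]) = (X + C a) * X + C 1 := by
    rw [add_mul, ← pow_two, C_1]; abel
  have hdeg : ((X + C a) * X : R[X]).natDegree = 2 := by compute_degree!
  rw [h, reverse_add_C, reverse_mul_X, reverse_add_C, reverse_X, hdeg, natDegree_X, C_1, one_mul,
    pow_one, add_mul, ← pow_two]
  abel

theorem reverse_one_add_C_mul_X_add_C_mul_X_sq_eq_self_iff {a b : R} (ha : a ≠ 0)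
    (ha1 : a ≠ 1) :
    (1 + C a * X + C b * X ^ 2 : R[X]).reverse = 1 + C a * X + C b * X ^ 2 ↔ b = 1 := by
  constructor
  · intro h
    have hcoeff := coeff_zero_reverse (1 + C a * X + C b * X ^ 2 : R[X])
    rw [h] at hcoeff
    by_cases hb : b = 0
    · subst hb
      rw [show (1 + C a * X + C 0 * X ^ 2 : R[X]) = C a * X + C 1 by simp; abel,
        leadingCoeff_linear ha] at hcoeff
      simp only [coeff_add, coeff_C_mul_X, coeff_C_zero] at hcoeff
      exact absurd (by simpa using hcoeff.symm) ha1
    · rw [show (1 + C a * X + C b * X ^ 2 : R[X]) = C b * X ^ 2 + C a * X + C 1 by simp; abel,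
        leadingCoeff_quadratic hb] at hcoeff
      simpa using hcoeff.symm
  · rintro rfl
    simpa using reverse_one_add_C_mul_X_add_X_sq a

end Polynomial

theorem stmt3_general (n i j : ℕ) (hi : 1 ≤ i) (hij : i < j)
    (p : Polynomial ℕ)
    (hp : p = (1 + Polynomial.X) ^ (n - j) *
      (1 + Polynomial.C j * Polynomial.X + Polynomial.C (j - i - 1) * Polynomial.X ^ 2)) :
    (∀ m : ℕ, m ≤ p.natDegree → p.coeff m = p.coeff (p.natDegree - m)) ↔
      j - i - 1 = 1 := by
  have h1X : (1 + Polynomial.X : Polynomial ℕ) ≠ 0 := by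
    rw [add_comm, ← Polynomial.C_1]; exact Polynomial.X_add_C_ne_zero 1
  rw [← Polynomial.reverse_eq_self_iff, hp, Polynomial.reverse_mul_of_domain,
    Polynomial.reverse_pow_of_domain, Polynomial.reverse_one_add_X,
    mul_right_inj' (pow_ne_zero _ h1X)]
  exact Polynomial.reverse_one_add_C_mul_X_add_C_mul_X_sq_eq_self_iff (by omega) (by omega)

/-- `p(t) = (1+t)^{n-j}(1 + j·t + (j-i-1)·t^2)` is symmetric (palindromic)
if and only if `j - i - 1 = 1`. -/
theorem stmt3 (n i j : ℕ) (hi : 1 ≤ i) (hij : i < j) (hjn : j ≤ n)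
    (p : Polynomial ℕ)
    (hp : p = (1 + Polynomial.X) ^ (n - j) *
      (1 + Polynomial.C j * Polynomial.X + Polynomial.C (j - i - 1) * Polynomial.X ^ 2)) :
    (∀ m : ℕ, m ≤ p.natDegree → p.coeff m = p.coeff (p.natDegree - m)) ↔
      j - i - 1 = 1 :=
  stmt3_general n i j hi hij p hp
end

section
/- Let (h_k)_{k∈ℤ} be a finitely supported sequence of nonnegative integers that is mid-heavy with h_k > 0 exactly for 0 ≤ k ≤ D. Then (h_k) is in the class ℋ, i.e., either h_{m−1} ≤ h_{D−m} ≤ h_m for all 1 ≤ m ≤ ⌊D/2⌋, or h_{D−m+1} ≤ h_m ≤ h_{D−m} for all 1 ≤ m ≤ ⌊D/2⌋. -/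
/-!
A comparison between `a j` and `a i` (with `j < i`) propagates outward through mid-heaviness to
every pair `(k, l)` with `k ≤ j` and the same sum `k + l = j + i`. Read contrapositively, a strict
comparison propagates inward. Since `a` vanishes just outside its support and is positive on it,
comparing with the outer pairs `(-1, D)` and `(0, D + 1)` gives the strict inequalities
`a (m - 1) < a (D - m)` and `a (D - m + 1) < a m`. The comparison of the innermost pair
`(c, D - c)`, `c = ⌊(D - 1) / 2⌋`, then propagates outward and picks the alternative of `ℋ`.
-/

open MvPolynomial

/-- A finitely supported sequence `(a_k)_{k∈ℤ}` (with support `[0, n]`) is mid-heavy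
if for all `j < i` with at least one of `i, j` in `[0, n]`: `a j ≤ a i` implies
`a (j-1) ≤ a (i+1)`, and `a j ≥ a i` implies `a (j-1) ≥ a (i+1)`. -/
def MidHeavy (a : ℤ → ℕ) (n : ℤ) : Prop :=
  ∀ i j : ℤ, j < i → ((0 ≤ i ∧ i ≤ n) ∨ (0 ≤ j ∧ j ≤ n)) →
    (a j ≤ a i → a (j - 1) ≤ a (i + 1)) ∧ (a i ≤ a j → a (i + 1) ≤ a (j - 1))

namespace MidHeavy

variable {a : ℤ → ℕ} {n : ℤ}

theorem rel_outward {r : ℕ → ℕ → Prop}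
    (hr : ∀ i j : ℤ, j < i → 0 ≤ j → j ≤ n → r (a j) (a i) → r (a (j - 1)) (a (i + 1)))
    {i j k l : ℤ} (hsum : k + l = j + i) (hk : -1 ≤ k) (hkj : k ≤ j) (hjn : j ≤ n) (hji : j < i) :
    r (a j) (a i) → r (a k) (a l) := by
  induction j, hkj using Int.leInduction generalizing i with
  | base =>
    obtain rfl : l = i := by omega
    exact id
  | succ j hkj ih =>
    intro hrel
    have hstep := hr i (j + 1) hji (by omega) hjn hrel
    rw [add_sub_cancel_right] at hstep
    exact ih (i := i + 1) (by omega) (by omega) (by omega) hstep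

theorem le_outward (ha : MidHeavy a n) {i j k l : ℤ} (hsum : k + l = j + i) (hk : -1 ≤ k)
    (hkj : k ≤ j) (hjn : j ≤ n) (hji : j < i) : a j ≤ a i → a k ≤ a l :=
  rel_outward (fun i j hji hj hjn ↦ (ha i j hji (Or.inr ⟨hj, hjn⟩)).1) hsum hk hkj hjn hji

theorem ge_outward (ha : MidHeavy a n) {i j k l : ℤ} (hsum : k + l = j + i) (hk : -1 ≤ k)
    (hkj : k ≤ j) (hjn : j ≤ n) (hji : j < i) : a i ≤ a j → a l ≤ a k :=
  rel_outward (r := fun x y ↦ y ≤ x) (fun i j hji hj hjn ↦ (ha i j hji (Or.inr ⟨hj, hjn⟩)).2)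
    hsum hk hkj hjn hji

variable (hsupp : ∀ m : ℤ, 0 < a m ↔ 0 ≤ m ∧ m ≤ n)
include hsupp

theorem lt_sub (ha : MidHeavy a n) {m : ℤ} (hm : 0 ≤ m) (hmn : 2 * m ≤ n) :
    a (m - 1) < a (n - m) := by
  by_contra! hle
  have hout : a n ≤ a (-1) := ha.ge_outward (by omega) le_rfl (by omega) (by omega) (by omega) hle
  have hpos : 0 < a n := (hsupp n).2 ⟨by omega, le_rfl⟩
  have hzero : ¬ 0 < a (-1) := fun h ↦ by have := (hsupp (-1)).1 h; omega
  omega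

theorem sub_add_one_lt (ha : MidHeavy a n) {m : ℤ} (hm : 0 ≤ m) (hmn : 2 * m ≤ n) :
    a (n - m + 1) < a m := by
  by_contra! hle
  have hout : a 0 ≤ a (n + 1) := ha.le_outward (by omega) (by omega) hm (by omega) (by omega) hle
  have hpos : 0 < a 0 := (hsupp 0).2 ⟨le_rfl, by omega⟩
  have hzero : ¬ 0 < a (n + 1) := fun h ↦ by have := (hsupp (n + 1)).1 h; omega
  omega

end MidHeavy

/-- A mid-heavy finitely supported sequence with support exactly `[0, D]` is in
the class `ℋ`. -/
theorem stmt4 (h : ℤ → ℕ) (D : ℕ)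
    (hsupp : ∀ m : ℤ, 0 < h m ↔ 0 ≤ m ∧ m ≤ (D : ℤ))
    (hmh : MidHeavy h D) :
    (∀ m : ℕ, 1 ≤ m → m ≤ D / 2 →
      h ((m : ℤ) - 1) ≤ h ((D : ℤ) - m) ∧ h ((D : ℤ) - m) ≤ h m) ∨
    (∀ m : ℕ, 1 ≤ m → m ≤ D / 2 →
      h ((D : ℤ) - m + 1) ≤ h m ∧ h m ≤ h ((D : ℤ) - m)) := by
  set c : ℤ := ((D : ℤ) - 1) / 2
  have inner_or_middle : ∀ m : ℕ, 1 ≤ m → m ≤ D / 2 → (m : ℤ) ≤ c ∨ (D : ℤ) - m = m := by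
    intro m _ _
    omega
  rcases le_total (h (D - c)) (h c) with hc | hc
  · refine Or.inl fun m hm hmD ↦ ⟨(hmh.lt_sub hsupp (by omega) (by omega)).le, ?_⟩
    rcases inner_or_middle m hm hmD with hmc | hmid
    · exact hmh.ge_outward (by omega) (by omega) hmc (by omega) (by omega) hc
    · rw [hmid]
  · refine Or.inr fun m hm hmD ↦ ⟨(hmh.sub_add_one_lt hsupp (by omega) (by omega)).le, ?_⟩
    rcases inner_or_middle m hm hmD with hmc | hmid
    · exact hmh.le_outward (by omega) (by omega) hmc (by omega) (by omega) hc
    · rw [hmid]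
end

section
/- Let (a_k)_{k∈ℤ} be a finitely supported sequence of nonnegative integers that is mid-heavy with a_k > 0 exactly for 0 ≤ k ≤ n. Then the sequence (b_k)_{k∈ℤ} defined by b_k = a_{k−1} + a_k (the coefficient sequence of (1+t)·p(t), where p is the generating function of (a_k)) is also mid-heavy, with b_k > 0 exactly for 0 ≤ k ≤ n+1. -/
open MvPolynomial

/-!
Write `b_k = a_{k-1} + a_k`. If `b_j ≤ b_i` with `j < i`, then already `a_{j-1} ≤ a_i`: either
`j = i - 1`, or `a_j ≤ a_{i-1}` and mid-heaviness of the pair `(i - 1, j)` gives it, or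
`a_j > a_{i-1}` and it follows from `b_j ≤ b_i`. Mid-heaviness of the pair `(i, j - 1)` then gives
`a_{j-2} ≤ a_{i+1}`, and adding up, `b_{j-1} ≤ b_{i+1}`. The reverse implication is the same
statement for the reflected sequence `k ↦ a_{n-k}`, which is again mid-heavy, and whose `b` is
`k ↦ b_{n+1-k}`. Outside the support the pair conditions can fail, but there the inequalities hold
for trivial reasons.
-/

namespace MidHeavy

variable {a : ℤ → ℕ} {n : ℕ}

theorem reflect (h : MidHeavy a n) : MidHeavy (fun k => a (n - k)) n := by
  intro i j hji hij
  obtain ⟨hle, hge⟩ := h (n - j) (n - i) (by omega) (by omega)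
  beta_reduce
  rw [show (n : ℤ) - (j - 1) = n - j + 1 by ring, show (n : ℤ) - (i + 1) = n - i - 1 by ring]
  exact ⟨hge, hle⟩

variable (hsupp : ∀ m : ℤ, 0 < a m ↔ 0 ≤ m ∧ m ≤ n) (hmh : MidHeavy a n)
include hsupp hmh

theorem le_of_add_le_add {i j : ℤ} (hji : j < i)
    (H : a (j - 1) + a j ≤ a (i - 1) + a i) : a (j - 1) ≤ a i := by
  rcases Nat.eq_zero_or_pos (a (j - 1)) with h0 | hpos
  · omega
  have hj := (hsupp (j - 1)).1 hpos
  by_cases hjn : j ≤ n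
  · rcases (by omega : j = i - 1 ∨ j < i - 1) with hj | hlt
    · rw [← hj] at H
      omega
    · have hmid := (hmh (i - 1) j hlt (.inr ⟨by omega, hjn⟩)).1
      rw [sub_add_cancel] at hmid
      omega
  · have := hsupp j
    have := hsupp (i - 1)
    have := hsupp i
    omega

theorem sub_two_le_add_one {i j : ℤ} (hji : j < i)
    (hij : (0 ≤ i ∧ i ≤ n + 1) ∨ (0 ≤ j ∧ j ≤ n + 1)) (h : a (j - 1) ≤ a i) :
    a (j - 2) ≤ a (i + 1) := by
  rcases Nat.eq_zero_or_pos (a (j - 2)) with h0 | hpos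
  · omega
  have hj := (hsupp (j - 2)).1 hpos
  have hmid := (hmh i (j - 1) (by omega) (.inr ⟨by omega, by omega⟩)).1 h
  rwa [sub_sub, one_add_one_eq_two] at hmid

theorem add_le_add_of_add_le_add {i j : ℤ} (hji : j < i)
    (hij : (0 ≤ i ∧ i ≤ n + 1) ∨ (0 ≤ j ∧ j ≤ n + 1))
    (H : a (j - 1) + a j ≤ a (i - 1) + a i) : a (j - 2) + a (j - 1) ≤ a (i + 1) + a i :=
  have h := le_of_add_le_add hsupp hmh hji H
  add_le_add (sub_two_le_add_one hsupp hmh hji hij h) h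

end MidHeavy

/-- If `(a_k)` is mid-heavy with support exactly `[0, n]`, then the coefficient
sequence `b_k = a_{k-1} + a_k` of `(1+t)·p(t)` is mid-heavy with support
exactly `[0, n+1]`. -/
theorem stmt5 (a : ℤ → ℕ) (n : ℕ)
    (hsupp : ∀ m : ℤ, 0 < a m ↔ 0 ≤ m ∧ m ≤ (n : ℤ))
    (hmh : MidHeavy a n) :
    (∀ m : ℤ, 0 < a (m - 1) + a m ↔ 0 ≤ m ∧ m ≤ (n : ℤ) + 1) ∧
    MidHeavy (fun m => a (m - 1) + a m) ((n : ℤ) + 1) := by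
  have hsupp_reflect : ∀ m : ℤ, 0 < a (n - m) ↔ 0 ≤ m ∧ m ≤ n := fun m => by
    rw [hsupp]; omega
  refine ⟨fun m => ?_, fun i j hji hij => ⟨fun H => ?_, fun H => ?_⟩⟩
  · rw [Nat.add_pos_iff_pos_or_pos, hsupp, hsupp]
    omega
  · have h := hmh.add_le_add_of_add_le_add hsupp hji hij H
    beta_reduce
    rw [add_sub_cancel_right, sub_sub, one_add_one_eq_two]
    omega
  · have h := hmh.reflect.add_le_add_of_add_le_add hsupp_reflect (i := n + 1 - j) (j := n + 1 - i)
      (by omega) (by omega) (by ring_nf at H ⊢; omega)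
    ring_nf at h ⊢
    omega
end

section
/- Let 1 ≤ i < j ≤ n and let (h_k)_{k∈ℤ} be the coefficient sequence of the polynomial (1+t)^{n−j}(1 + j·t + (j−i−1)·t^2) (extended by zero outside its support). Then (h_k) is a mid-heavy sequence. -/
/-!
Multiplying a polynomial by `1 + t` replaces its coefficient sequence `a` by
`b k = a k + a (k - 1)`, and this operation preserves mid-heaviness while extending the
support `[0, d]` to `[0, d + 1]`. Indeed, if `b J ≤ b I` then `a (J - 1) ≤ a I`: otherwise
`a J < a (I - 1)`, and mid-heaviness of `a` at the pair `(I - 1, J)` would give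
`a (J - 1) ≤ a I`. Mid-heaviness at `(I, J - 1)` then gives `a (J - 2) ≤ a (I + 1)`, and adding
yields `b (J - 1) ≤ b (I + 1)`; the reverse inequalities are symmetric. It remains to start
from `1 + j t + c t ^ 2` with `c = j - i - 1 < j`, whose coefficients `1, j, c` are mid-heavy
by inspection.
-/

open MvPolynomial

open scoped Polynomial

def coeffSeq (p : ℕ[X]) : ℤ → ℕ := fun m => if 0 ≤ m then p.coeff m.toNat else 0

def pascalStep (a : ℤ → ℕ) : ℤ → ℕ := fun k => a k + a (k - 1)

/-- A mid-heavy sequence with support exactly `[0, d]`, as in the paper. The mid-heavy condition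
is only required for pairs `0 ≤ j < i ≤ d`; the other pairs follow from the support condition
(`IsMidHeavySeq.midHeavy`). -/
structure IsMidHeavySeq (a : ℤ → ℕ) (d : ℕ) : Prop where
  pos : ∀ k : ℤ, 0 ≤ k → k ≤ d → 0 < a k
  eq_zero_of_neg : ∀ k : ℤ, k < 0 → a k = 0
  eq_zero_of_gt : ∀ k : ℤ, (d : ℤ) < k → a k = 0
  inner : ∀ i j : ℤ, 0 ≤ j → j < i → i ≤ d →
    (a j ≤ a i → a (j - 1) ≤ a (i + 1)) ∧ (a i ≤ a j → a (i + 1) ≤ a (j - 1))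

namespace IsMidHeavySeq

variable {a : ℤ → ℕ} {d : ℕ}

theorem midHeavy (h : IsMidHeavySeq a d) : MidHeavy a d := by
  intro i j hji hij
  by_cases hj : j < 0
  · have hi : 0 ≤ i ∧ i ≤ d := by omega
    have := h.pos i hi.1 hi.2
    rw [h.eq_zero_of_neg j hj, h.eq_zero_of_neg (j - 1) (by omega)]
    omega
  by_cases hi : (d : ℤ) < i
  · have := h.pos j (by omega) (by omega)
    rw [h.eq_zero_of_gt i hi, h.eq_zero_of_gt (i + 1) (by omega)]
    omega
  exact h.inner i j (by omega) hji (by omega)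

theorem pascalStep_le (h : IsMidHeavySeq a d) {i j : ℤ} (hj : 0 ≤ j) (hji : j < i)
    (hid : i ≤ d + 1) (hle : pascalStep a j ≤ pascalStep a i) :
    pascalStep a (j - 1) ≤ pascalStep a (i + 1) := by
  unfold pascalStep at *
  have hclaim : a (j - 1) ≤ a i := by
    by_contra! hlt
    have hshift : a j < a (i - 1) := by omega
    by_cases hij : i = j + 1
    · subst hij
      simp only [add_sub_cancel_right] at hshift
      omega
    · have := (h.midHeavy (i - 1) j (by omega) (Or.inr ⟨hj, by omega⟩)).1 hshift.le
      rw [sub_add_cancel] at this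
      omega
  rcases hj.eq_or_lt with rfl | hj
  · simp [h.eq_zero_of_neg]
  · have := (h.midHeavy i (j - 1) (by omega) (Or.inr ⟨by omega, by omega⟩)).1 hclaim
    rw [add_sub_cancel_right]
    omega

theorem pascalStep_ge (h : IsMidHeavySeq a d) {i j : ℤ} (hj : 0 ≤ j) (hji : j < i)
    (hid : i ≤ d + 1) (hle : pascalStep a i ≤ pascalStep a j) :
    pascalStep a (i + 1) ≤ pascalStep a (j - 1) := by
  unfold pascalStep at *
  have hclaim : a i ≤ a (j - 1) := by
    by_contra! hlt
    have hshift : a (i - 1) < a j := by omega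
    by_cases hij : i = j + 1
    · subst hij
      simp only [add_sub_cancel_right] at hshift
      omega
    · have := (h.midHeavy (i - 1) j (by omega) (Or.inr ⟨hj, by omega⟩)).2 hshift.le
      rw [sub_add_cancel] at this
      omega
  rcases hid.eq_or_lt with rfl | hid
  · simp [h.eq_zero_of_gt]
  · have := (h.midHeavy i (j - 1) (by omega) (Or.inl ⟨by omega, by omega⟩)).2 hclaim
    rw [add_sub_cancel_right]
    omega

theorem pascalStep (h : IsMidHeavySeq a d) : IsMidHeavySeq (pascalStep a) (d + 1) where
  pos k hk hkd := by
    unfold _root_.pascalStep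
    rcases (show k ≤ d ∨ k = d + 1 by omega) with hkd | rfl
    · have := h.pos k hk hkd
      omega
    · have := h.pos d (by omega) le_rfl
      simp only [add_sub_cancel_right]
      omega
  eq_zero_of_neg k hk := by
    simp [_root_.pascalStep, h.eq_zero_of_neg k hk, h.eq_zero_of_neg (k - 1) (by omega)]
  eq_zero_of_gt k hk := by
    simp [_root_.pascalStep, h.eq_zero_of_gt k (by omega), h.eq_zero_of_gt (k - 1) (by omega)]
  inner i j hj hji hid :=
    ⟨h.pascalStep_le hj hji (by exact_mod_cast hid), h.pascalStep_ge hj hji (by exact_mod_cast hid)⟩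

end IsMidHeavySeq

theorem coeffSeq_one_add_X_mul (p : ℕ[X]) :
    coeffSeq ((1 + Polynomial.X) * p) = pascalStep (coeffSeq p) := by
  ext k
  simp only [coeffSeq, pascalStep]
  rcases lt_trichotomy k 0 with hk | rfl | hk
  · rw [if_neg (by omega), if_neg (by omega), if_neg (by omega)]
  · simp [Polynomial.mul_coeff_zero]
  · obtain ⟨m, rfl⟩ : ∃ m : ℕ, k = m + 1 := ⟨k.toNat - 1, by omega⟩
    simp [add_mul, Polynomial.coeff_X_mul, show (0 : ℤ) ≤ m + 1 by omega]

theorem IsMidHeavySeq.one_add_X_pow_mul {p : ℕ[X]} {d : ℕ} (h : IsMidHeavySeq (coeffSeq p) d)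
    (m : ℕ) : IsMidHeavySeq (coeffSeq ((1 + Polynomial.X) ^ m * p)) (d + m) := by
  induction m generalizing p d with
  | zero => simpa using h
  | succ m ih =>
    rw [pow_succ, mul_assoc, add_comm m, ← add_assoc]
    apply ih
    rw [coeffSeq_one_add_X_mul]
    exact h.pascalStep

theorem IsMidHeavySeq.natDegree_eq {p : ℕ[X]} {d : ℕ} (h : IsMidHeavySeq (coeffSeq p) d) :
    p.natDegree = d := by
  refine Polynomial.natDegree_eq_of_le_of_coeff_ne_zero ?_ (h.pos d (by omega) le_rfl).ne'
  rw [Polynomial.natDegree_le_iff_coeff_eq_zero]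
  intro k hk
  simpa [coeffSeq] using h.eq_zero_of_gt k (by omega)

theorem coeffSeq_quadratic (j c : ℕ) (k : ℤ) :
    coeffSeq (1 + Polynomial.C j * Polynomial.X + Polynomial.C c * Polynomial.X ^ 2) k =
      if k = 0 then 1 else if k = 1 then j else if k = 2 then c else 0 := by
  unfold coeffSeq
  by_cases hk : 0 ≤ k
  · obtain ⟨m, rfl⟩ := Int.eq_ofNat_of_zero_le hk
    simp [Polynomial.coeff_one, Polynomial.coeff_X, Polynomial.coeff_X_pow]
    split_ifs <;> omega
  · rw [if_neg hk, if_neg (by omega), if_neg (by omega), if_neg (by omega)]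

theorem isMidHeavySeq_quadratic {j c : ℕ} (hcj : c < j) :
    IsMidHeavySeq (coeffSeq (1 + Polynomial.C j * Polynomial.X + Polynomial.C c * Polynomial.X ^ 2))
      (if c = 0 then 1 else 2) := by
  constructor <;> simp only [coeffSeq_quadratic]
  · intro k hk hkd
    split_ifs at hkd ⊢ <;> omega
  · intro k hk
    split_ifs <;> omega
  · intro k hk
    split_ifs at hk ⊢ <;> omega
  · intro k l hl hlk hkd
    have hpairs : (k = 1 ∧ l = 0) ∨ (k = 2 ∧ l = 0) ∨ (k = 2 ∧ l = 1) := by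
      split_ifs at hkd <;> omega
    rcases hpairs with ⟨rfl, rfl⟩ | ⟨rfl, rfl⟩ | ⟨rfl, rfl⟩ <;> norm_num <;> omega

theorem stmt6_general (n i j : ℕ) (hij : i < j)
    (p : Polynomial ℕ)
    (hp : p = (1 + Polynomial.X) ^ (n - j) *
      (1 + Polynomial.C j * Polynomial.X + Polynomial.C (j - i - 1) * Polynomial.X ^ 2)) :
    MidHeavy (fun m : ℤ => if 0 ≤ m then p.coeff m.toNat else 0) (p.natDegree : ℤ) := by
  have h := (isMidHeavySeq_quadratic (show j - i - 1 < j by omega)).one_add_X_pow_mul (n - j)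
  rw [← hp] at h
  rw [h.natDegree_eq]
  exact h.midHeavy

/-- The coefficient sequence of `(1+t)^{n-j}(1 + j·t + (j-i-1)·t^2)`, extended by
zero outside its support, is a mid-heavy sequence. -/
theorem stmt6 (n i j : ℕ) (hi : 1 ≤ i) (hij : i < j) (hjn : j ≤ n)
    (p : Polynomial ℕ)
    (hp : p = (1 + Polynomial.X) ^ (n - j) *
      (1 + Polynomial.C j * Polynomial.X + Polynomial.C (j - i - 1) * Polynomial.X ^ 2)) :
    MidHeavy (fun m : ℤ => if 0 ≤ m then p.coeff m.toNat else 0) (p.natDegree : ℤ) :=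
  stmt6_general n i j hij p hp
end

section
/- Let k be a field, let A, B, P be matrices over k such that the product A·P·B is defined, and let α ∈ k be nonzero. Then the block matrix M = [[A·P, 0], [α·P, P·B]] satisfies rank(M) = rank(P) + rank(A·P·B). -/
/-! Unitriangular block row and column operations (subtract `α⁻¹ A` times the second block row
from the first, and the first block column times `α⁻¹ B` from the second) turn `M` into the
anti-diagonal block matrix `[[0, -α⁻¹ APB], [αP, 0]]`, whose rank is `rank P + rank (APB)`. -/

open Module

theorem Submodule.finrank_prod {K V W : Type*} [DivisionRing K] [AddCommGroup V] [Module K V]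
    [AddCommGroup W] [Module K W] (p : Submodule K V) (q : Submodule K W)
    [FiniteDimensional K p] [FiniteDimensional K q] :
    finrank K (p.prod q) = finrank K p + finrank K q := by
  have hrange : p.prod q = LinearMap.range (p.subtype.prodMap q.subtype) := by
    rw [LinearMap.range_prodMap, Submodule.range_subtype, Submodule.range_subtype]
  rw [hrange, LinearMap.finrank_range_of_inj (p.injective_subtype.prodMap q.injective_subtype),
    Module.finrank_prod]

namespace Matrix

variable {K : Type*} [Field K] {l m n o : Type*} [Fintype m] [Fintype o]

theorem rank_fromBlocks_zero₁₂_zero₂₁ (A : Matrix l m K) (D : Matrix n o K) :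
    (fromBlocks A 0 0 D).rank = A.rank + D.rank := by
  have hfactor : (fromBlocks A 0 0 D).mulVecLin =
      (LinearEquiv.sumArrowLequivProdArrow l n K K).symm.toLinearMap ∘ₗ
        (A.mulVecLin.prodMap D.mulVecLin) ∘ₗ
        (LinearEquiv.sumArrowLequivProdArrow m o K K).toLinearMap := by
    ext x i
    cases i <;> simp [fromBlocks_mulVec, LinearEquiv.sumArrowLequivProdArrow,
      Equiv.sumArrowEquivProdArrow]
  rw [rank, hfactor, LinearMap.range_comp,
    LinearMap.range_comp_of_range_eq_top _ (LinearEquiv.range _), LinearMap.range_prodMap,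
    LinearEquiv.finrank_map_eq, Submodule.finrank_prod]
  rfl

theorem rank_fromBlocks_zero₁₁_zero₂₂ (B : Matrix l o K) (C : Matrix n m K) :
    (fromBlocks 0 B C 0).rank = B.rank + C.rank := by
  have hswap : (fromBlocks 0 B C 0).submatrix (Equiv.sumComm n l) (Equiv.refl _) =
      fromBlocks C 0 0 B := by
    ext (i | i) (j | j) <;> rfl
  rw [← rank_submatrix _ (Equiv.sumComm n l) (Equiv.refl _), hswap,
    rank_fromBlocks_zero₁₂_zero₂₁, add_comm]

end Matrix

/-- For matrices `A, P, B` over a field with `A·P·B` defined and `α ≠ 0`,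
the block matrix `[[A·P, 0], [α·P, P·B]]` has rank `rank P + rank (A·P·B)`. -/
theorem stmt10 (k : Type*) [Field k] {a b c d : Type*}
    [Fintype a] [Fintype b] [Fintype c] [Fintype d]
    [DecidableEq a] [DecidableEq b] [DecidableEq c] [DecidableEq d]
    (A : Matrix a b k) (P : Matrix b c k) (B : Matrix c d k)
    (α : k) (hα : α ≠ 0) :
    (Matrix.fromBlocks (A * P) 0 (α • P) (P * B)).rank =
      P.rank + (A * P * B).rank := by
  open Matrix in
  calc (fromBlocks (A * P) 0 (α • P) (P * B)).rank
      = (fromBlocks (1 : Matrix a a k) (-α⁻¹ • A) 0 (1 : Matrix b b k) *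
          fromBlocks (A * P) 0 (α • P) (P * B) *
          fromBlocks (1 : Matrix c c k) (-α⁻¹ • B) 0 (1 : Matrix d d k)).rank := by
        rw [rank_mul_eq_left_of_isUnit_det, rank_mul_eq_right_of_isUnit_det] <;> simp
    _ = (fromBlocks 0 (-α⁻¹ • (A * P * B)) (α • P) 0).rank := by
        simp [fromBlocks_multiply, smul_mul, smul_smul, hα, Matrix.mul_assoc]
    _ = P.rank + (A * P * B).rank := by
        rw [rank_fromBlocks_zero₁₁_zero₂₂, add_comm,
          rank_smul_of_mem_nonZeroDivisors _ (mem_nonZeroDivisors_of_ne_zero hα),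
          rank_smul_of_mem_nonZeroDivisors _ (mem_nonZeroDivisors_of_ne_zero (by simpa using hα))]
end

section
/- Let k be a field of characteristic zero, R = k[x_1, x_2, x_3], d ≥ 3 an integer, and I = (x_1, x_2)^d + (x_3^d). Then A = R/I does not satisfy the strong Lefschetz property: for ℓ = x_1 + x_2 + x_3, the multiplication map ·ℓ^3 : A_{d−2} → A_{d+1} is not injective even though dim_k A_{d+1} ≥ dim_k A_{d−2}. -/
/-!
Write a linear form as `ℓ = x - y` with `x ∈ (x₀, x₁)` and `y ∈ (x₂)`, so that
`x^d, y^d ∈ I`. With `h_m = ∑_{i+j=m} x^i y^j` one has `(x - y) h_m = x^(m+1) - y^(m+1)`,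
and for `F = ∑_{i+j=d-2} h_i h_j` this gives
`(x - y)^3 F = ((d-1)(x - y) - 2y) x^d + ((d-1)(x - y) + 2x) y^d ∈ I`.
In characteristic zero `F ≠ 0` as soon as `x ≠ 0`, since `F(x, 0) = (d-1) x^(d-2)`
(if `x = 0`, then `x₂^(d-2)` does the job), and `I` has no nonzero homogeneous element of
degree `< d`; so `·ℓ^3 : A_(d-2) → A_(d+1)` is never injective. It is not surjective either: `I` is a
monomial ideal avoiding every `x^μ` with `μ₀ + μ₁ < d` and `μ₂ < d`, and there are at least
as many such monomials of degree `d + 1` as monomials of degree `d - 2`.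
-/

open MvPolynomial

/-- `ℓ` is a strong Lefschetz element for `R/I`: multiplication by every power of `ℓ`
has full rank (is injective or surjective) between any two graded pieces. -/
def IsSLElement {n : ℕ} (k : Type*) [Field k] (I : Ideal (MvPolynomial (Fin n) k))
    (ℓ : MvPolynomial (Fin n) k) : Prop :=
  ∀ t m : ℕ,
    (∀ x ∈ quotPiece k I m, Ideal.Quotient.mk I (ℓ ^ t) * x = 0 → x = 0) ∨
    (quotPiece k I (m + t) ≤
      (quotPiece k I m).map (LinearMap.mulLeft k (Ideal.Quotient.mk I (ℓ ^ t))))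

/-- `R/I` has the strong Lefschetz property. -/
def StrongLefschetz {n : ℕ} (k : Type*) [Field k]
    (I : Ideal (MvPolynomial (Fin n) k)) : Prop :=
  ∃ ℓ ∈ MvPolynomial.homogeneousSubmodule (Fin n) k 1, IsSLElement k I ℓ

open Finset Finsupp Module

lemma Submodule.not_le_map_of_finrank_le {K V W : Type*} [Field K] [AddCommGroup V] [Module K V]
    [AddCommGroup W] [Module K W] {P : Submodule K V} [FiniteDimensional K P] {Q : Submodule K W}
    (f : V →ₗ[K] W) {x : V} (hxP : x ∈ P) (hx : x ≠ 0) (hfx : f x = 0)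
    (hPQ : finrank K P ≤ finrank K Q) : ¬ Q ≤ P.map f := by
  intro hQ
  have hlt : finrank K (P.map f) < finrank K P := by
    by_contra! hle
    exact hx (Submodule.disjoint_def.1 (Submodule.disjoint_ker_of_finrank_le f hle) x hxP hfx)
  exact (hPQ.trans (Submodule.finrank_mono hQ)).not_gt hlt

section CompleteHom

variable {A : Type*} [CommRing A]

def completeHom (x y : A) (m : ℕ) : A := ∑ p ∈ antidiagonal m, x ^ p.1 * y ^ p.2

def completeHomSq (x y : A) (n : ℕ) : A :=
  ∑ p ∈ antidiagonal n, completeHom x y p.1 * completeHom x y p.2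

lemma sub_mul_completeHom (x y : A) (m : ℕ) :
    (x - y) * completeHom x y m = x ^ (m + 1) - y ^ (m + 1) := by
  rw [completeHom, Nat.sum_antidiagonal_eq_sum_range_succ (fun i j => x ^ i * y ^ j), mul_comm,
    ← geom_sum₂_mul]
  simp

lemma completeHom_zero_right (x : A) (m : ℕ) : completeHom x 0 m = x ^ m := by
  rw [completeHom, Nat.sum_antidiagonal_eq_sum_range_succ (fun i j => x ^ i * (0 : A) ^ j),
    sum_range_succ, sum_eq_zero fun i hi => ?_]
  · simp
  · simp [zero_pow (Nat.sub_ne_zero_of_lt (mem_range.1 hi))]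

lemma map_completeHom {B F : Type*} [CommRing B] [FunLike F A B] [RingHomClass F A B] (f : F)
    (x y : A) (m : ℕ) :
    f (completeHom x y m) = completeHom (f x) (f y) m := by
  simp [completeHom]

lemma sub_sq_mul_completeHomSq (x y : A) (n : ℕ) :
    (x - y) ^ 2 * completeHomSq x y n =
      (n + 1) * (x ^ (n + 2) + y ^ (n + 2)) - 2 * x * y * completeHom x y n := by
  have hterm : ∀ p ∈ antidiagonal n, (x - y) ^ 2 * (completeHom x y p.1 * completeHom x y p.2) =
      x ^ (n + 2) + y ^ (n + 2) - x * y * (x ^ p.1 * y ^ p.2) - x * y * (x ^ p.2 * y ^ p.1) := by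
    rintro ⟨i, j⟩ hij
    rw [← mem_antidiagonal.1 hij]
    linear_combination (x - y) * completeHom x y j * sub_mul_completeHom x y i +
      (x ^ (i + 1) - y ^ (i + 1)) * sub_mul_completeHom x y j
  have hswap : ∑ p ∈ antidiagonal n, x ^ p.2 * y ^ p.1 = completeHom x y n :=
    Nat.sum_antidiagonal_swap (f := fun p => x ^ p.1 * y ^ p.2)
  rw [completeHomSq, Finset.mul_sum, sum_congr rfl hterm, sum_sub_distrib, sum_sub_distrib,
    sum_const, Nat.card_antidiagonal, ← Finset.mul_sum, ← Finset.mul_sum, hswap, nsmul_eq_mul,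
    completeHom]
  push_cast
  ring

lemma sub_pow_three_mul_completeHomSq (x y : A) (n : ℕ) :
    (x - y) ^ 3 * completeHomSq x y n =
      ((n + 1) * (x - y) - 2 * y) * x ^ (n + 2) + ((n + 1) * (x - y) + 2 * x) * y ^ (n + 2) := by
  linear_combination
    (x - y) * sub_sq_mul_completeHomSq x y n - 2 * x * y * sub_mul_completeHom x y n

lemma completeHomSq_zero_right (x : A) (n : ℕ) : completeHomSq x 0 n = (n + 1) * x ^ n := by
  simp_rw [completeHomSq, completeHom_zero_right, ← pow_add]
  rw [sum_congr rfl fun p hp => by rw [mem_antidiagonal.1 hp], sum_const, Nat.card_antidiagonal,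
    nsmul_eq_mul]
  push_cast
  ring

lemma map_completeHomSq {B F : Type*} [CommRing B] [FunLike F A B] [RingHomClass F A B] (f : F)
    (x y : A) (n : ℕ) :
    f (completeHomSq x y n) = completeHomSq (f x) (f y) n := by
  simp [completeHomSq, map_completeHom]

end CompleteHom

section Homogeneous

variable {σ R : Type*} [CommRing R] {x y : MvPolynomial σ R}

lemma isHomogeneous_completeHom (hx : x.IsHomogeneous 1) (hy : y.IsHomogeneous 1) (m : ℕ) :
    (completeHom x y m).IsHomogeneous m :=
  IsHomogeneous.sum _ _ _ fun p hp => by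
    simpa [← mem_antidiagonal.1 hp] using (hx.pow p.1).mul (hy.pow p.2)

lemma isHomogeneous_completeHomSq (hx : x.IsHomogeneous 1) (hy : y.IsHomogeneous 1) (n : ℕ) :
    (completeHomSq x y n).IsHomogeneous n :=
  IsHomogeneous.sum _ _ _ fun p hp => by
    simpa [← mem_antidiagonal.1 hp] using
      (isHomogeneous_completeHom hx hy p.1).mul (isHomogeneous_completeHom hx hy p.2)

end Homogeneous

section WeightIdeal

variable {σ R : Type*} [CommSemiring R] (w : σ → ℕ)

noncomputable def weightIdeal (e : ℕ) : Ideal (MvPolynomial σ R) :=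
  Ideal.span ((monomial · 1) '' {μ | e ≤ weight w μ})

variable {w}

lemma coeff_eq_zero_of_mem_weightIdeal {e : ℕ} {g : MvPolynomial σ R}
    (hg : g ∈ weightIdeal w e) {μ : σ →₀ ℕ} (hμ : weight w μ < e) : g.coeff μ = 0 := by
  by_contra h
  obtain ⟨ν, hν, hνμ⟩ :=
    mem_ideal_span_monomial_image.1 hg μ (MvPolynomial.mem_support_iff.2 h)
  obtain ⟨δ, rfl⟩ := le_iff_exists_add.1 hνμ
  have hν' : e ≤ weight w ν := hν
  rw [map_add] at hμ
  omega

lemma X_mem_weightIdeal (i : σ) : (X i : MvPolynomial σ R) ∈ weightIdeal w (w i) :=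
  Ideal.subset_span ⟨single i 1, by simp [weight_single], rfl⟩

lemma weightIdeal_mul_le (a b : ℕ) :
    weightIdeal w a * weightIdeal w b ≤ (weightIdeal w (a + b) : Ideal (MvPolynomial σ R)) := by
  rw [weightIdeal, weightIdeal, Ideal.span_mul_span', Ideal.span_le]
  rintro _ ⟨_, ⟨μ, hμ, rfl⟩, _, ⟨ν, hν, rfl⟩, rfl⟩
  refine Ideal.subset_span ⟨μ + ν, ?_, by simp⟩
  simp only [Set.mem_ofPred_eq, map_add] at hμ hν ⊢
  omega

lemma pow_le_weightIdeal {J : Ideal (MvPolynomial σ R)} (hJ : J ≤ weightIdeal w 1) (n : ℕ) :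
    J ^ n ≤ weightIdeal w n := by
  induction n with
  | zero =>
    rw [pow_zero, Ideal.one_eq_top, top_le_iff]
    exact Ideal.eq_top_of_isUnit_mem _ (Ideal.subset_span ⟨0, by simp, rfl⟩) isUnit_one
  | succ n ih => exact (Ideal.mul_mono ih hJ).trans (weightIdeal_mul_le n 1)

end WeightIdeal

section QuotPiece

variable {k : Type*} [Field k]

lemma finrank_restrictSupport {σ : Type*} (s : Set (σ →₀ ℕ)) :
    finrank k (restrictSupport k s) = s.ncard := by
  rw [finrank_eq_nat_card_basis (basisRestrictSupport k s), Nat.card_coe_set_eq]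

lemma finrank_homogeneousSubmodule (σ : Type*) (m : ℕ) :
    finrank k (homogeneousSubmodule σ k m) = {μ : σ →₀ ℕ | μ.degree = m}.ncard := by
  rw [homogeneousSubmodule_eq_finsupp_supported]
  exact finrank_restrictSupport _

instance {σ : Type*} [Finite σ] (m : ℕ) : Module.Finite k (homogeneousSubmodule σ k m) :=
  Module.Finite.iff_fg.2 (homogeneousSubmodule_fg _ _ m)

variable {n : ℕ} (I : Ideal (MvPolynomial (Fin n) k))

instance (m : ℕ) : Module.Finite k (quotPiece k I m) := by
  unfold quotPiece; infer_instance

lemma finrank_quotPiece_le (m : ℕ) :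
    finrank k (quotPiece k I m) ≤ {μ : Fin n →₀ ℕ | μ.degree = m}.ncard :=
  (Submodule.finrank_map_le _ _).trans (finrank_homogeneousSubmodule _ m).le

lemma ncard_le_finrank_quotPiece {m : ℕ} {T : Set (Fin n →₀ ℕ)}
    (hT : ∀ μ ∈ T, μ.degree = m) (hI : ∀ g ∈ I, ∀ μ ∈ T, g.coeff μ = 0) :
    T.ncard ≤ finrank k (quotPiece k I m) := by
  set P := restrictSupport k T
  have hPm : P ≤ homogeneousSubmodule (Fin n) k m := by
    rw [homogeneousSubmodule_eq_finsupp_supported]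
    exact restrictSupport_mono (R := k) hT
  have hinj : Function.Injective ((Ideal.Quotient.mkₐ k I).toLinearMap.domRestrict P) := by
    rw [LinearMap.injective_domRestrict_iff, Submodule.disjoint_def]
    intro g hgP hgI
    ext μ
    by_cases hμ : μ ∈ T
    · exact hI g (Ideal.Quotient.eq_zero_iff_mem.1 hgI) μ hμ
    · exact MvPolynomial.notMem_support_iff.1 fun h => hμ (hgP h)
  calc T.ncard = finrank k P := (finrank_restrictSupport T).symm
    _ = finrank k (P.map (Ideal.Quotient.mkₐ k I).toLinearMap) := by
        rw [← LinearMap.range_domRestrict, LinearMap.finrank_range_of_inj hinj]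
    _ ≤ finrank k (quotPiece k I m) := Submodule.finrank_mono (Submodule.map_mono hPm)

end QuotPiece

section PairPowIdeal

variable (k : Type*) [Field k]

noncomputable def pairPowIdeal (d : ℕ) : Ideal (MvPolynomial (Fin 3) k) :=
  Ideal.span {X 0, X 1} ^ d + Ideal.span {X 2 ^ d}

variable {k} {d : ℕ}

lemma coeff_eq_zero_of_mem_pairPowIdeal {g : MvPolynomial (Fin 3) k} (hg : g ∈ pairPowIdeal k d)
    {μ : Fin 3 →₀ ℕ} (h01 : μ 0 + μ 1 < d) (h2 : μ 2 < d) : g.coeff μ = 0 := by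
  have hle : pairPowIdeal k d ≤ weightIdeal ![1, 1, 0] d ⊔ weightIdeal ![0, 0, 1] d := by
    refine sup_le_sup (pow_le_weightIdeal ?_ d) ?_
    · rw [Ideal.span_le, Set.insert_subset_iff, Set.singleton_subset_iff]
      exact ⟨X_mem_weightIdeal 0, X_mem_weightIdeal 1⟩
    · rw [Ideal.span_singleton_le_iff_mem, X_pow_eq_monomial]
      exact Ideal.subset_span ⟨_, by simp [weight_single], rfl⟩
  obtain ⟨g₁, hg₁, g₂, hg₂, rfl⟩ := Submodule.mem_sup.1 (hle hg)
  rw [coeff_add, coeff_eq_zero_of_mem_weightIdeal hg₁, coeff_eq_zero_of_mem_weightIdeal hg₂,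
    add_zero] <;> simpa [weight_eq_sum, Fin.sum_univ_three]

lemma notMem_pairPowIdeal {F : MvPolynomial (Fin 3) k} {m : ℕ} (hF : F.IsHomogeneous m)
    (hm : m < d) (hF0 : F ≠ 0) : F ∉ pairPowIdeal k d := by
  refine fun hmem => hF0 (MvPolynomial.ext _ _ fun μ => ?_)
  by_cases hμ : F.coeff μ = 0
  · simpa using hμ
  have hdeg : μ 0 + μ 1 + μ 2 = m := by
    simpa [weight_eq_sum, Fin.sum_univ_three] using hF hμ
  exact absurd (coeff_eq_zero_of_mem_pairPowIdeal hmem (by omega) (by omega)) hμ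

lemma ncard_degree_eq_sub_two_le (hd : 3 ≤ d) :
    {μ : Fin 3 →₀ ℕ | μ.degree = d - 2}.ncard ≤
      {μ : Fin 3 →₀ ℕ | μ.degree = d + 1 ∧ μ 0 + μ 1 < d ∧ μ 2 < d}.ncard := by
  have hdeg : ∀ μ : Fin 3 →₀ ℕ, μ.degree = μ 0 + μ 1 + μ 2 := fun μ => by
    rw [degree_eq_sum, Fin.sum_univ_three]
  -- shift by `(1, 0, 2)`, except for `(0, 0, d - 2)`, whose shift would violate `μ₂ < d`
  refine Set.ncard_le_ncard_of_injOn
    (fun μ => if μ 2 = d - 2 then single 1 2 + single 2 (d - 1) else μ + single 0 1 + single 2 2)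
    (fun μ hμ => ?_) (fun μ hμ ν hν hμν => ?_)
    ((finite_of_degree_eq (d + 1)).subset fun μ hμ => hμ.1)
  · simp only [Set.mem_ofPred_eq, hdeg] at hμ ⊢
    split_ifs <;> simp <;> omega
  · simp only [Set.mem_ofPred_eq, hdeg] at hμ hν
    have h0 := DFunLike.congr_fun hμν 0
    have h1 := DFunLike.congr_fun hμν 1
    have h2 := DFunLike.congr_fun hμν 2
    dsimp only at h0 h1 h2
    ext i
    fin_cases i <;> split_ifs at h0 h1 h2 <;> simp at h0 h1 h2 ⊢ <;> omega

lemma finrank_quotPiece_pairPowIdeal_le (hd : 3 ≤ d) :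
    finrank k (quotPiece k (pairPowIdeal k d) (d - 2)) ≤
      finrank k (quotPiece k (pairPowIdeal k d) (d + 1)) :=
  (finrank_quotPiece_le _ _).trans <| (ncard_degree_eq_sub_two_le hd).trans <|
    ncard_le_finrank_quotPiece _ (fun _ hμ => hμ.1) fun _ hg _ hμ =>
      coeff_eq_zero_of_mem_pairPowIdeal hg hμ.2.1 hμ.2.2

lemma exists_isHomogeneous_ne_zero_pow_three_mul_mem [CharZero k] (hd : 2 ≤ d)
    {ℓ : MvPolynomial (Fin 3) k} (hℓ : ℓ ∈ homogeneousSubmodule (Fin 3) k 1) :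
    ∃ F : MvPolynomial (Fin 3) k, F.IsHomogeneous (d - 2) ∧ F ≠ 0 ∧
      ℓ ^ 3 * F ∈ pairPowIdeal k d := by
  rw [homogeneousSubmodule_one_eq_span_X] at hℓ
  obtain ⟨c, rfl⟩ := (Submodule.mem_span_range_iff_exists_fun k).1 hℓ
  obtain ⟨n, rfl⟩ : ∃ n, d = n + 2 := ⟨d - 2, by omega⟩
  rw [Fin.sum_univ_three, Nat.add_sub_cancel]
  set x : MvPolynomial (Fin 3) k := c 0 • X 0 + c 1 • X 1
  have hsmulX (i : Fin 3) : (c i • X i : MvPolynomial (Fin 3) k).IsHomogeneous 1 :=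
    Submodule.smul_mem (homogeneousSubmodule (Fin 3) k 1) (c i) (isHomogeneous_X k i)
  by_cases hx : x = 0
  · refine ⟨X 2 ^ n, isHomogeneous_X_pow 2 n, pow_ne_zero _ (X_ne_zero 2), ?_⟩
    rw [hx, zero_add, smul_eq_C_mul,
      show (C (c 2) * X 2 : MvPolynomial (Fin 3) k) ^ 3 * X 2 ^ n =
        C (c 2) ^ 3 * X 2 * X 2 ^ (n + 2) by ring]
    exact Ideal.mul_mem_left _ _ (Ideal.mem_sup_right (Ideal.mem_span_singleton_self _))
  set y : MvPolynomial (Fin 3) k := -(c 2 • X 2) with hy_def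
  refine ⟨completeHomSq x y n, ?_, ?_, ?_⟩
  · exact isHomogeneous_completeHomSq ((hsmulX 0).add (hsmulX 1)) (hsmulX 2).neg n
  · intro hF
    set φ := aeval (R := k) (Function.update X 2 0 : Fin 3 → MvPolynomial (Fin 3) k)
    have hφx : φ x = x := by simp [φ, x, Function.update_of_ne]
    have hφy : φ y = 0 := by simp [φ, y]
    have hφF := congrArg φ hF
    rw [map_zero, map_completeHomSq, hφx, hφy, completeHomSq_zero_right] at hφF
    exact mul_ne_zero (Nat.cast_add_one_ne_zero n) (pow_ne_zero n hx) hφF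
  · rw [show x + c 2 • X 2 = x - y by ring, sub_pow_three_mul_completeHomSq]
    refine Ideal.add_mem _ (Ideal.mul_mem_left _ _ (Ideal.mem_sup_left (Ideal.pow_mem_pow ?_ _)))
      (Ideal.mul_mem_left _ _ (Ideal.mem_sup_right ?_))
    · exact add_mem (Submodule.smul_of_tower_mem _ _ (Ideal.subset_span (by simp)))
        (Submodule.smul_of_tower_mem _ _ (Ideal.subset_span (by simp)))
    · rw [hy_def, ← neg_smul, smul_pow]
      exact Submodule.smul_of_tower_mem _ _ (Ideal.mem_span_singleton_self _)

lemma exists_ne_zero_mem_quotPiece_mul_eq_zero [CharZero k] (hd : 2 ≤ d)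
    {ℓ : MvPolynomial (Fin 3) k} (hℓ : ℓ ∈ homogeneousSubmodule (Fin 3) k 1) :
    ∃ x ∈ quotPiece k (pairPowIdeal k d) (d - 2), x ≠ 0 ∧
      Ideal.Quotient.mk _ (ℓ ^ 3) * x = 0 := by
  obtain ⟨F, hF, hF0, hℓF⟩ := exists_isHomogeneous_ne_zero_pow_three_mul_mem hd hℓ
  refine ⟨Ideal.Quotient.mk _ F, ⟨F, hF, rfl⟩, ?_, ?_⟩
  · rw [Ne, Ideal.Quotient.eq_zero_iff_mem]
    exact notMem_pairPowIdeal hF (by omega) hF0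
  · rw [← map_mul, Ideal.Quotient.eq_zero_iff_mem]
    exact hℓF

end PairPowIdeal

/-- For `I = (x_1, x_2)^d + (x_3^d)` in `k[x_1,x_2,x_3]`, char `k = 0`, `d ≥ 3`:
`R/I` fails the strong Lefschetz property; multiplication by `ℓ^3` with
`ℓ = x_1 + x_2 + x_3` fails to be injective from degree `d-2` to degree `d+1`
even though `dim A_{d+1} ≥ dim A_{d-2}`. -/
theorem stmt12 (k : Type*) [Field k] [CharZero k] (d : ℕ) (hd : 3 ≤ d)
    (I : Ideal (MvPolynomial (Fin 3) k))
    (hI : I = (Ideal.span {X 0, X 1}) ^ d + Ideal.span {(X 2 : MvPolynomial (Fin 3) k) ^ d}) :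
    ¬ StrongLefschetz k I ∧
    Module.finrank k (quotPiece k I (d - 2)) ≤ Module.finrank k (quotPiece k I (d + 1)) ∧
    ∃ x ∈ quotPiece k I (d - 2), x ≠ 0 ∧
      Ideal.Quotient.mk I ((X 0 + X 1 + X 2 : MvPolynomial (Fin 3) k) ^ 3) * x = 0 := by
  obtain rfl : I = pairPowIdeal k d := hI
  have hdim := finrank_quotPiece_pairPowIdeal_le (k := k) hd
  refine ⟨?_, hdim, exists_ne_zero_mem_quotPiece_mul_eq_zero (d := d) (by omega) ?_⟩
  · rintro ⟨ℓ, hℓ, hSL⟩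
    obtain ⟨x, hx, hx0, hℓx⟩ :=
      exists_ne_zero_mem_quotPiece_mul_eq_zero (d := d) (by omega) hℓ
    rcases hSL 3 (d - 2) with hinj | hsurj
    · exact hx0 (hinj x hx hℓx)
    · rw [show d - 2 + 3 = d + 1 by omega] at hsurj
      exact Submodule.not_le_map_of_finrank_le _ hx hx0 hℓx hdim hsurj
  · exact ((isHomogeneous_X k 0).add (isHomogeneous_X k 1)).add (isHomogeneous_X k 2)
end

section
/- Let d ≥ 3 be an integer and work in the polynomial ring ℚ[y_1, y_2]. Let g_d = Σ_{m=0}^{d} y_1^{d−m} (−y_2)^m (so that (y_1 + y_2)·g_d = y_1^{d+1} − (−y_2)^{d+1}) and let f_d = ∂²g_d/∂y_1∂y_2. Then −(y_1 + y_2)^3 · f_d = (d−1)(y_1^{d+1} − (−y_2)^{d+1}) + (d+1)(y_1^d y_2 + y_1 (−y_2)^d). -/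
/-!
Since `(y₁ + y₂) g = y₁^(d+1) - (-y₂)^(d+1)` is the geometric-sum identity, Leibniz's rule
applied to it gives `∂₁g`, `∂₂g` and `∂₁∂₂g` in terms of `g` after multiplying by powers of
`y₁ + y₂`; eliminating `g` from these three relations yields the identity.
-/

open MvPolynomial Finset

theorem add_mul_sum_pow_mul_neg_pow {R : Type*} [CommRing R] (x y : R) (d : ℕ) :
    (x + y) * ∑ m ∈ range (d + 1), x ^ (d - m) * (-y) ^ m = x ^ (d + 1) - (-y) ^ (d + 1) := by
  have h := geom_sum₂_mul x (-y) (d + 1)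
  rw [geom_sum₂_comm, sub_neg_eq_add, Nat.add_sub_cancel] at h
  simpa only [mul_comm] using h

theorem neg_X_add_X_pow_three_mul_pderiv_pderiv {R σ : Type*} [CommRing R] {i j : σ}
    (hij : i ≠ j) {d : ℕ} {g : MvPolynomial σ R}
    (hg : (X i + X j) * g = X i ^ (d + 1) - (-X j) ^ (d + 1)) :
    -(X i + X j) ^ 3 * pderiv i (pderiv j g) =
      ((d : MvPolynomial σ R) - 1) * (X i ^ (d + 1) - (-X j) ^ (d + 1)) +
        ((d : MvPolynomial σ R) + 1) * (X i ^ d * X j + X i * (-X j) ^ d) := by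
  have hXi : pderiv j (X i : MvPolynomial σ R) = 0 := pderiv_X_of_ne hij
  have hXj : pderiv i (X j : MvPolynomial σ R) = 0 := pderiv_X_of_ne hij.symm
  have h_i : (X i + X j) * pderiv i g + g = ((d : MvPolynomial σ R) + 1) * X i ^ d := by
    simpa [pderiv_mul, hXj] using congrArg (pderiv i) hg
  have h_j : (X i + X j) * pderiv j g + g = ((d : MvPolynomial σ R) + 1) * (-X j) ^ d := by
    simpa [pderiv_mul, hXi] using congrArg (pderiv j) hg
  have h_ij : (X i + X j) * pderiv i (pderiv j g) + pderiv j g + pderiv i g = 0 := by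
    simpa [pderiv_mul, hXj] using congrArg (pderiv i) h_j
  linear_combination (X i + X j) * h_i + (X i + X j) * h_j - (X i + X j) ^ 2 * h_ij - 2 * hg

theorem stmt14_general (d : ℕ)
    (y1 y2 g f : MvPolynomial (Fin 2) ℚ)
    (hy1 : y1 = X 0) (hy2 : y2 = X 1)
    (hg : g = ∑ m ∈ Finset.range (d + 1), y1 ^ (d - m) * (-y2) ^ m)
    (hf : f = pderiv 0 (pderiv 1 g)) :
    -((y1 + y2) ^ 3) * f =
      C ((d : ℚ) - 1) * (y1 ^ (d + 1) - (-y2) ^ (d + 1)) +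
      C ((d : ℚ) + 1) * (y1 ^ d * y2 + y1 * (-y2) ^ d) := by
  subst hy1 hy2 hf
  have hmul : (X 0 + X 1) * g = X 0 ^ (d + 1) - (-X 1) ^ (d + 1) := by
    rw [hg, add_mul_sum_pow_mul_neg_pow]
  rw [neg_X_add_X_pow_three_mul_pderiv_pderiv (by decide) hmul]
  simp only [map_sub, map_add, map_natCast, map_one]

/-- The polynomial identity
`-(y_1+y_2)^3 f_d = (d-1)(y_1^{d+1} - (-y_2)^{d+1}) + (d+1)(y_1^d y_2 + y_1 (-y_2)^d)`
where `g_d = Σ_{m=0}^d y_1^{d-m}(-y_2)^m` (so `(y_1+y_2)·g_d = y_1^{d+1} - (-y_2)^{d+1}`)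
and `f_d = ∂²g_d/∂y_1∂y_2`, in `ℚ[y_1, y_2]`. -/
theorem stmt14 (d : ℕ) (hd : 3 ≤ d)
    (y1 y2 g f : MvPolynomial (Fin 2) ℚ)
    (hy1 : y1 = X 0) (hy2 : y2 = X 1)
    (hg : g = ∑ m ∈ Finset.range (d + 1), y1 ^ (d - m) * (-y2) ^ m)
    (hf : f = pderiv 0 (pderiv 1 g)) :
    -((y1 + y2) ^ 3) * f =
      C ((d : ℚ) - 1) * (y1 ^ (d + 1) - (-y2) ^ (d + 1)) +
      C ((d : ℚ) + 1) * (y1 ^ d * y2 + y1 * (-y2) ^ d) :=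
  stmt14_general d y1 y2 g f hy1 hy2 hg hf
end

section
/- Let k be a field, d ≥ 3 an integer, R = k[x_1, x_2, x_3, x_4], I = (x_1, x_2)^d + (x_3^d, x_4^d), and A = R/I. Then dim_k A_{2d−3} = (Σ_{i=1}^{d} i²) + d(d−1)/2 − d and dim_k A_{2d−2} = Σ_{i=1}^{d} i²; in particular dim_k A_{2d−3} ≥ dim_k A_{2d−2}. -/
open MvPolynomial

/-!
`I` is a monomial ideal: the residues of the monomials `x^α` of degree `m` outside `I` form a
basis of `A_m`, and `x^α ∉ I` exactly when `α₁ + α₂ < d`, `α₃ < d` and `α₄ < d`. Sorting these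
exponents by `s = α₁ + α₂` gives the tensor decomposition
`dim A_m = ∑_{s < d} (s + 1) · #{(c, e) | c + e = m - s, c < d, e < d}`.
For `m = 2d - 2` the `s`-th term is `(s + 1)²`; for `m = 2d - 3` it is `(s + 1)(s + 2)`,
except for `s = d - 1`, where it is `d (d - 1)`.
-/
open Finset

namespace MvPolynomial

section CoeffVanishing

variable {σ R : Type*} [CommSemiring R]

def coeffVanishingIdeal (P : Set (σ →₀ ℕ)) (hP : IsLowerSet P) : Ideal (MvPolynomial σ R) where
  carrier := {f | ∀ α ∈ P, coeff α f = 0}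
  zero_mem' _ _ := coeff_zero _
  add_mem' hf hg α hα := by rw [coeff_add, hf α hα, hg α hα, add_zero]
  smul_mem' c f hf α hα := by
    classical
    rw [smul_eq_mul, coeff_mul]
    refine sum_eq_zero fun q hq => ?_
    rw [hf q.2 (hP (mem_antidiagonal.mp hq ▸ le_add_self) hα), mul_zero]

lemma monomial_mem_coeffVanishingIdeal {P : Set (σ →₀ ℕ)} (hP : IsLowerSet P) {β : σ →₀ ℕ}
    (hβ : β ∉ P) (a : R) : monomial β a ∈ coeffVanishingIdeal P hP := fun α hα => by
  classical
  rw [coeff_monomial, if_neg (by rintro rfl; exact hβ hα)]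

lemma coeff_eq_zero_of_mem_pow_span_X {s : Finset σ} {n : ℕ} {f : MvPolynomial σ R}
    (hf : f ∈ Ideal.span (X '' (s : Set σ)) ^ n) {α : σ →₀ ℕ} (hα : ∑ i ∈ s, α i < n) :
    coeff α f = 0 := by
  have hP (j : ℕ) : IsLowerSet {α : σ →₀ ℕ | ∑ i ∈ s, α i < j} := fun α β hβα hα =>
    (sum_le_sum fun i _ => hβα i).trans_lt hα
  have hspan : Ideal.span (X '' (s : Set σ)) ≤ coeffVanishingIdeal (R := R) _ (hP 1) := by
    rw [Ideal.span_le]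
    rintro _ ⟨i, hi, rfl⟩
    refine monomial_mem_coeffVanishingIdeal (hP 1) (fun h => ?_) 1
    simpa using sum_eq_zero_iff.mp (Nat.lt_one_iff.mp h) i hi
  suffices ∀ j, Ideal.span (X '' (s : Set σ)) ^ j ≤ coeffVanishingIdeal (R := R) _ (hP j) from
    this n hf α hα
  intro j
  induction j with
  | zero => exact fun _ _ α hα => absurd hα (Nat.not_lt_zero _)
  | succ n ih =>
    rw [pow_succ]
    refine Ideal.mul_le.mpr fun f hf g hg α hα => ?_
    classical
    rw [coeff_mul]
    refine sum_eq_zero fun q hq => ?_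
    have hsum : ∑ i ∈ s, q.1 i + ∑ i ∈ s, q.2 i = ∑ i ∈ s, α i := by
      rw [← sum_add_distrib, ← mem_antidiagonal.mp hq]; rfl
    rcases lt_or_ge (∑ i ∈ s, q.1 i) n with h | h
    · rw [ih hf q.1 h, zero_mul]
    · have hq : ∑ i ∈ s, q.2 i < 1 := by change ∑ i ∈ s, α i < n + 1 at hα; omega
      rw [hspan hg q.2 hq, mul_zero]

lemma coeff_eq_zero_of_mem_span_X_pow {t : Set σ} {d : ℕ} {f : MvPolynomial σ R}
    (hf : f ∈ Ideal.span ((X · ^ d) '' t)) {α : σ →₀ ℕ} (hα : ∀ i ∈ t, α i < d) :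
    coeff α f = 0 := by
  have hP : IsLowerSet {α : σ →₀ ℕ | ∀ i ∈ t, α i < d} := fun α β hβα hα i hi =>
    (hβα i).trans_lt (hα i hi)
  suffices Ideal.span ((X · ^ d) '' t) ≤ coeffVanishingIdeal (R := R) _ hP from this hf α hα
  rw [Ideal.span_le]
  rintro _ ⟨i, hi, rfl⟩
  change X i ^ d ∈ _
  rw [X_pow_eq_monomial]
  exact monomial_mem_coeffVanishingIdeal hP (fun h => by simpa using h i hi) 1

end CoeffVanishing

section RestrictSupport

variable {σ R : Type*} [CommRing R]

lemma map_mk_restrictSupport_eq (I : Ideal (MvPolynomial σ R)) {B D : Set (σ →₀ ℕ)}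
    (hBD : B ⊆ D) (hD : ∀ α ∈ D, α ∉ B → monomial α 1 ∈ I) :
    (restrictSupport R D).map (Ideal.Quotient.mkₐ R I).toLinearMap =
      (restrictSupport R B).map (Ideal.Quotient.mkₐ R I).toLinearMap := by
  refine le_antisymm ?_ (Submodule.map_mono (restrictSupport_mono R hBD))
  rw [Submodule.map_le_iff_le_comap, restrictSupport_eq_span, Submodule.span_le]
  rintro _ ⟨α, hα, rfl⟩
  by_cases hαB : α ∈ B
  · exact Submodule.mem_map_of_mem (by simp [hαB])
  · simp only [SetLike.mem_coe, Submodule.mem_comap]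
    rw [AlgHom.toLinearMap_apply, Ideal.Quotient.mkₐ_eq_mk,
      Ideal.Quotient.eq_zero_iff_mem.mpr (hD α hα hαB)]
    exact zero_mem _

lemma finrank_map_mk_restrictSupport [Nontrivial R] (I : Ideal (MvPolynomial σ R))
    (B : Finset (σ →₀ ℕ)) (hB : ∀ f ∈ I, ∀ α ∈ B, coeff α f = 0) :
    Module.finrank R ((restrictSupport R (B : Set (σ →₀ ℕ))).map
      (Ideal.Quotient.mkₐ R I).toLinearMap) = #B := by
  set p := restrictSupport R (B : Set (σ →₀ ℕ))
  have hinj : Function.Injective ((Ideal.Quotient.mkₐ R I).toLinearMap ∘ₗ p.subtype) := by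
    rw [← LinearMap.ker_eq_bot, LinearMap.ker_eq_bot']
    rintro ⟨f, hfB⟩ hf
    have hfI : f ∈ I := Ideal.Quotient.eq_zero_iff_mem.mp hf
    ext α
    by_cases hα : α ∈ B
    · exact hB f hfI α hα
    · exact notMem_support_iff.mp fun h => hα (hfB h)
  rw [← Submodule.range_subtype p, ← LinearMap.range_comp, LinearMap.finrank_range_of_inj hinj,
    Module.finrank_eq_card_basis (basisRestrictSupport R _)]
  simp

end RestrictSupport

theorem finrank_quotPiece_eq_card {k : Type*} [Field k] {n : ℕ}
    (I : Ideal (MvPolynomial (Fin n) k)) (m : ℕ) (B : Finset (Fin n →₀ ℕ))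
    (hdeg : ∀ α ∈ B, α.degree = m)
    (hmem : ∀ α : Fin n →₀ ℕ, α.degree = m → α ∉ B → monomial α 1 ∈ I)
    (hcoeff : ∀ f ∈ I, ∀ α ∈ B, coeff α f = 0) :
    Module.finrank k (quotPiece k I m) = #B := by
  rw [quotPiece, homogeneousSubmodule_eq_finsupp_supported]
  change Module.finrank k ((restrictSupport k {α | α.degree = m}).map
    (Ideal.Quotient.mkₐ k I).toLinearMap) = _
  rw [map_mk_restrictSupport_eq I (D := {α | α.degree = m}) hdeg hmem,
    finrank_map_mk_restrictSupport I B hcoeff]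

end MvPolynomial

def boxAntidiagonal (d t : ℕ) : Finset (ℕ × ℕ) :=
  (antidiagonal t).filter fun p => p.1 < d ∧ p.2 < d

lemma mem_boxAntidiagonal {d t : ℕ} {p : ℕ × ℕ} :
    p ∈ boxAntidiagonal d t ↔ p.1 + p.2 = t ∧ p.1 < d ∧ p.2 < d := by
  rw [boxAntidiagonal, mem_filter, HasAntidiagonal.mem_antidiagonal]

lemma card_boxAntidiagonal (d t : ℕ) : #(boxAntidiagonal d t) = min d (t + 1) - (t + 1 - d) := by
  rw [← Nat.card_Ico]
  refine card_nbij' Prod.fst (fun c => (c, t - c)) ?_ ?_ ?_ fun _ _ => rfl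
  · intro p hp
    simp only [mem_coe, mem_boxAntidiagonal, mem_Ico] at hp ⊢
    omega
  · intro c hc
    simp only [mem_coe, mem_boxAntidiagonal, mem_Ico] at hc ⊢
    omega
  · intro p hp
    simp only [mem_coe, mem_boxAntidiagonal] at hp
    exact Prod.ext rfl (by dsimp only; omega)

lemma sum_range_add_one_sq (d : ℕ) : ∑ s ∈ range d, (s + 1) ^ 2 = ∑ i ∈ Icc 1 d, i ^ 2 := by
  rw [← Ico_add_one_right_eq_Icc, sum_Ico_eq_sum_range, Nat.add_sub_cancel]
  simp only [add_comm]

noncomputable def mixedPowerIdeal (R : Type*) [CommSemiring R] (d : ℕ) :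
    Ideal (MvPolynomial (Fin 4) R) :=
  Ideal.span {X 0, X 1} ^ d + Ideal.span {X 2 ^ d, X 3 ^ d}

namespace mixedPowerIdeal

def standardExponents (d m : ℕ) : Finset (Fin 4 →₀ ℕ) :=
  (univ.finsuppAntidiag m).filter fun α => α 0 + α 1 < d ∧ α 2 < d ∧ α 3 < d

variable {R : Type*} [CommSemiring R] {d : ℕ}

lemma monomial_mem {α : Fin 4 →₀ ℕ} (hα : d ≤ α 0 + α 1 ∨ d ≤ α 2 ∨ d ≤ α 3) :
    monomial α (1 : R) ∈ mixedPowerIdeal R d := by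
  rw [monomial_eq, C_1, one_mul, Finsupp.prod_fintype _ _ (fun _ => pow_zero _),
    Fin.prod_univ_four]
  rcases hα with h | h | h
  · refine Submodule.mem_sup_left (Ideal.mul_mem_right _ _ (Ideal.mul_mem_right _ _ ?_))
    refine Ideal.pow_le_pow_right h ?_
    rw [pow_add]
    exact Ideal.mul_mem_mul (Ideal.pow_mem_pow (Ideal.subset_span (by simp)) _)
      (Ideal.pow_mem_pow (Ideal.subset_span (by simp)) _)
  · refine Submodule.mem_sup_right (Ideal.mul_mem_right _ _ (Ideal.mul_mem_left _ _ ?_))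
    exact Ideal.pow_mem_of_pow_mem _ (m := d) (Ideal.subset_span (by simp)) h
  · refine Submodule.mem_sup_right (Ideal.mul_mem_left _ _ ?_)
    exact Ideal.pow_mem_of_pow_mem _ (m := d) (Ideal.subset_span (by simp)) h

lemma coeff_eq_zero_of_mem {f : MvPolynomial (Fin 4) R} (hf : f ∈ mixedPowerIdeal R d)
    {α : Fin 4 →₀ ℕ} (hα : α 0 + α 1 < d ∧ α 2 < d ∧ α 3 < d) : coeff α f = 0 := by
  obtain ⟨g, hg, h, hh, rfl⟩ := Submodule.mem_sup.mp hf
  have hX : ({X 0, X 1} : Set (MvPolynomial (Fin 4) R)) = X '' ↑({0, 1} : Finset (Fin 4)) := by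
    simp [Set.image_insert_eq]
  have hXd : ({X 2 ^ d, X 3 ^ d} : Set (MvPolynomial (Fin 4) R)) = (X · ^ d) '' {2, 3} := by
    simp [Set.image_insert_eq]
  rw [hX] at hg
  rw [hXd] at hh
  rw [coeff_add, coeff_eq_zero_of_mem_pow_span_X hg (by simpa using hα.1),
    coeff_eq_zero_of_mem_span_X_pow hh (by simpa using hα.2), add_zero]

lemma mem_standardExponents {m : ℕ} {α : Fin 4 →₀ ℕ} :
    α ∈ standardExponents d m ↔ α.degree = m ∧ α 0 + α 1 < d ∧ α 2 < d ∧ α 3 < d := by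
  simp [standardExponents, Finsupp.degree_eq_sum]

lemma finrank_quotPiece {k : Type*} [Field k] (m : ℕ) :
    Module.finrank k (quotPiece k (mixedPowerIdeal k d) m) = #(standardExponents d m) := by
  refine finrank_quotPiece_eq_card _ m _ (fun α hα => (mem_standardExponents.mp hα).1)
    (fun α hα hαB => monomial_mem ?_)
    (fun f hf α hα => coeff_eq_zero_of_mem hf (mem_standardExponents.mp hα).2)
  rw [mem_standardExponents] at hαB
  omega

lemma card_standardExponents {m : ℕ} (hdm : d ≤ m + 1) :
    #(standardExponents d m) = ∑ s ∈ range d, (s + 1) * #(boxAntidiagonal d (m - s)) := by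
  rw [card_eq_sum_card_fiberwise (f := fun α => α 0 + α 1) (t := range d)
    fun α hα => mem_range.mpr (mem_standardExponents.mp hα).2.1]
  refine sum_congr rfl fun s hs => ?_
  rw [← Nat.card_antidiagonal s, ← card_product]
  refine card_nbij' (fun α => ((α 0, α 1), (α 2, α 3)))
    (fun p => .single 0 p.1.1 + .single 1 p.1.2 + .single 2 p.2.1 + .single 3 p.2.2) ?_ ?_ ?_ ?_
  · intro α hα
    simp only [mem_coe, mem_filter, mem_standardExponents, Finsupp.degree_eq_sum, Fin.sum_univ_four,
      mem_product, HasAntidiagonal.mem_antidiagonal, mem_boxAntidiagonal] at hα ⊢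
    omega
  · rintro ⟨⟨a, b⟩, c, e⟩ hp
    simp only [mem_coe, mem_filter, mem_product, mem_boxAntidiagonal,
      HasAntidiagonal.mem_antidiagonal, mem_range, mem_standardExponents, Finsupp.degree_eq_sum,
      Fin.sum_univ_four, Finsupp.coe_add, Pi.add_apply, Finsupp.single_eq_same,
      Finsupp.single_eq_of_ne, ne_eq, Fin.reduceEq, not_false_eq_true, add_zero, zero_add] at hp hs ⊢
    omega
  · intro α _
    ext i
    fin_cases i <;> simp
  · rintro ⟨⟨a, b⟩, c, e⟩ _
    simp

lemma card_standardExponents_two_mul_sub_two (hd : 1 ≤ d) :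
    #(standardExponents d (2 * d - 2)) = ∑ i ∈ Icc 1 d, i ^ 2 := by
  rw [card_standardExponents (by omega), ← sum_range_add_one_sq]
  refine sum_congr rfl fun s hs => ?_
  rw [mem_range] at hs
  rw [card_boxAntidiagonal,
    show min d (2 * d - 2 - s + 1) - (2 * d - 2 - s + 1 - d) = s + 1 by omega, sq]

lemma card_standardExponents_two_mul_sub_three (hd : 2 ≤ d) :
    #(standardExponents d (2 * d - 3)) + d = ∑ i ∈ Icc 1 d, i ^ 2 + d * (d - 1) / 2 := by
  obtain ⟨e, rfl⟩ : ∃ e, d = e + 1 := ⟨d - 1, by omega⟩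
  have hlow : ∑ s ∈ range e, (s + 1) * #(boxAntidiagonal (e + 1) (2 * (e + 1) - 3 - s)) =
      ∑ s ∈ range e, ((s + 1) ^ 2 + (s + 1)) := by
    refine sum_congr rfl fun s hs => ?_
    rw [mem_range] at hs
    rw [card_boxAntidiagonal,
      show min (e + 1) (2 * (e + 1) - 3 - s + 1) - (2 * (e + 1) - 3 - s + 1 - (e + 1)) = s + 2 by
        omega]
    ring
  have htop : #(boxAntidiagonal (e + 1) (2 * (e + 1) - 3 - e)) = e := by
    rw [card_boxAntidiagonal]
    omega
  rw [card_standardExponents (by omega), ← sum_range_add_one_sq, ← sum_range_id, sum_range_succ,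
    hlow, htop, sum_add_distrib, sum_range_succ, sum_range_succ']
  ring

end mixedPowerIdeal

/-- For `I = (x_1, x_2)^d + (x_3^d, x_4^d)` in `k[x_1,…,x_4]` and `d ≥ 3`,
`dim A_{2d-3} = (Σ_{i=1}^d i²) + d(d-1)/2 - d` and `dim A_{2d-2} = Σ_{i=1}^d i²`;
in particular `dim A_{2d-3} ≥ dim A_{2d-2}`. -/
theorem stmt16 (k : Type*) [Field k] (d : ℕ) (hd : 3 ≤ d)
    (I : Ideal (MvPolynomial (Fin 4) k))
    (hI : I = (Ideal.span {X 0, X 1}) ^ d +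
      Ideal.span {(X 2 : MvPolynomial (Fin 4) k) ^ d, (X 3 : MvPolynomial (Fin 4) k) ^ d}) :
    Module.finrank k (quotPiece k I (2 * d - 3)) =
      (∑ i ∈ Finset.Icc 1 d, i ^ 2) + d * (d - 1) / 2 - d ∧
    Module.finrank k (quotPiece k I (2 * d - 2)) = ∑ i ∈ Finset.Icc 1 d, i ^ 2 ∧
    Module.finrank k (quotPiece k I (2 * d - 2)) ≤
      Module.finrank k (quotPiece k I (2 * d - 3)) := by
  obtain rfl : I = mixedPowerIdeal k d := hI
  have hodd := mixedPowerIdeal.card_standardExponents_two_mul_sub_three (d := d) (by omega)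
  have hd_le : d ≤ d * (d - 1) / 2 :=
    (Nat.le_div_iff_mul_le two_pos).mpr (Nat.mul_le_mul_left d (by omega))
  rw [mixedPowerIdeal.finrank_quotPiece, mixedPowerIdeal.finrank_quotPiece,
    mixedPowerIdeal.card_standardExponents_two_mul_sub_two (by omega)]
  omega
end

section
/- Let k be a field of characteristic zero, d ≥ 3 an integer, R = k[x_1,…,x_5], I = (x_1, x_2)^d + (x_3^d, x_4^d, x_5^d), and ℓ = x_1 + x_2 + x_3 + x_4 + x_5. Let f = (Σ_{m=0}^{d−1} (x_1+x_2)^{d−1−m} (−x_3)^m) · (Σ_{m=0}^{d−1} x_4^{d−1−m} (−x_5)^m), a homogeneous polynomial of degree 2d−2. Then ℓ·f ∈ I while f ∉ I; in particular, the multiplication map ·ℓ : (R/I)_{2d−2} → (R/I)_{2d−1} is not injective. -/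
/-!
Writing `ℓ = (x₁ + x₂ + x₃) + (x₄ + x₅)`, each summand times its own factor of `f` is a difference
of two `d`-th powers lying in `I`, so `ℓ·f ∈ I`. To see `f ∉ I`, substitute `x₂ = x₃ = x₅ = 0`:
`I` lands in the monomial ideal `(y₁^d, y₂^d)` of `k[y₁, y₂]`, while `f` becomes
`y₁^(d-1) y₂^(d-1)`, which is divisible by neither generator.
-/

open MvPolynomial

open Finset

section NegGeomSum

variable {R S : Type*} [CommRing R] [CommRing S]

/-- The quotient `(x ^ n - (-y) ^ n) / (x + y)`. -/
def negGeomSum (x y : R) (n : ℕ) : R :=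
  ∑ m ∈ range n, x ^ (n - 1 - m) * (-y) ^ m

theorem add_mul_negGeomSum (x y : R) (n : ℕ) :
    (x + y) * negGeomSum x y n = x ^ n - (-y) ^ n := by
  have h := geom_sum₂_mul (-y) x n
  rw [negGeomSum]
  rw [sum_congr rfl fun m _ => mul_comm _ _] at h
  linear_combination -h

theorem negGeomSum_zero_right (x : R) {n : ℕ} (hn : 0 < n) :
    negGeomSum x 0 n = x ^ (n - 1) := by
  obtain ⟨n, rfl⟩ := Nat.exists_eq_add_of_lt hn
  simp [negGeomSum, sum_range_succ']

theorem map_negGeomSum {F : Type*} [FunLike F R S] [RingHomClass F R S] (φ : F) (x y : R)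
    (n : ℕ) : φ (negGeomSum x y n) = negGeomSum (φ x) (φ y) n := by
  simp [negGeomSum]

theorem MvPolynomial.IsHomogeneous.negGeomSum {σ : Type*} {a b : MvPolynomial σ R} {i : ℕ}
    (ha : a.IsHomogeneous i) (hb : b.IsHomogeneous i) (n : ℕ) :
    (_root_.negGeomSum a b n).IsHomogeneous (i * (n - 1)) := by
  refine IsHomogeneous.sum _ _ _ fun m hm => ?_
  have hdeg : i * (n - 1) = i * (n - 1 - m) + i * m := by
    rw [← mul_add, Nat.sub_add_cancel (Nat.le_sub_one_of_lt (mem_range.mp hm))]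
  exact hdeg ▸ (ha.pow _).mul (hb.neg.pow _)

end NegGeomSum

theorem Ideal.add_mul_mul_mem {R : Type*} [CommRing R] {I : Ideal R} {u v g h : R}
    (hg : u * g ∈ I) (hh : v * h ∈ I) : (u + v) * (g * h) ∈ I := by
  rw [add_mul, ← mul_assoc, mul_left_comm]
  exact I.add_mem (I.mul_mem_right h hg) (I.mul_mem_left g hh)

theorem Ideal.pow_sub_neg_pow_mem {R : Type*} [CommRing R] {I : Ideal R} {x y : R} {n : ℕ}
    (hx : x ^ n ∈ I) (hy : y ^ n ∈ I) : x ^ n - (-y) ^ n ∈ I :=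
  I.sub_mem hx (neg_pow y n ▸ I.mul_mem_left _ hy)

theorem MvPolynomial.X_pow_mul_X_pow_notMem_span_X_pow_pair {σ R : Type*} [CommSemiring R]
    [Nontrivial R] {i j : σ} (hij : i ≠ j) {a b d : ℕ} (ha : a < d) (hb : b < d) :
    X i ^ a * X j ^ b ∉ Ideal.span {(X i ^ d : MvPolynomial σ R), X j ^ d} := by
  classical
  have hgens : {(X i ^ d : MvPolynomial σ R), X j ^ d} =
      (fun s => monomial s (1 : R)) '' {Finsupp.single i d, Finsupp.single j d} := by
    simp [Set.image_pair, X_pow_eq_monomial]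
  rw [hgens, mem_ideal_span_monomial_image, X_pow_eq_monomial, X_pow_eq_monomial, monomial_mul,
    one_mul, support_monomial, if_neg one_ne_zero]
  simp only [Finset.mem_singleton, forall_eq, Set.mem_insert_iff, Set.mem_singleton_iff,
    exists_eq_or_imp, exists_eq_left, not_or]
  exact ⟨fun h => ha.not_ge (by simpa [hij] using h i),
    fun h => hb.not_ge (by simpa [hij.symm] using h j)⟩

theorem span_X_pow_le_comap_aeval {R : Type*} [CommRing R] {d : ℕ} (hd : d ≠ 0) :
    Ideal.span {X 0, X 1} ^ d + Ideal.span {X 2 ^ d, X 3 ^ d, X 4 ^ d} ≤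
      (Ideal.span {X 0 ^ d, X 1 ^ d}).comap
        (aeval ![X 0, 0, 0, X 1, 0] : MvPolynomial (Fin 5) R →ₐ[R] MvPolynomial (Fin 2) R) := by
  set φ : MvPolynomial (Fin 5) R →ₐ[R] MvPolynomial (Fin 2) R := aeval ![X 0, 0, 0, X 1, 0]
  refine sup_le ?_ (Ideal.span_le.mpr ?_)
  · calc Ideal.span {X 0, X 1} ^ d ≤ (Ideal.span {X 0}).comap φ ^ d := by
          refine Ideal.pow_right_mono (Ideal.span_le.mpr ?_) d
          rintro _ (rfl | rfl) <;> simp [φ]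
      _ ≤ (Ideal.span {X 0} ^ d).comap φ := Ideal.le_comap_pow _ d
      _ ≤ _ := by
          rw [Ideal.span_singleton_pow]
          exact Ideal.comap_mono (Ideal.span_mono (by simp))
  · rintro _ (rfl | rfl | rfl)
    · simp [φ, zero_pow hd]
    · simpa [φ] using Ideal.subset_span (by simp)
    · simp [φ, zero_pow hd]

theorem stmt17_general (k : Type*) [Field k] (d : ℕ) (hd : 3 ≤ d)
    (I : Ideal (MvPolynomial (Fin 5) k))
    (hI : I = (Ideal.span {X 0, X 1}) ^ d +
      Ideal.span {(X 2 : MvPolynomial (Fin 5) k) ^ d, (X 3 : MvPolynomial (Fin 5) k) ^ d,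
        (X 4 : MvPolynomial (Fin 5) k) ^ d})
    (ℓ f : MvPolynomial (Fin 5) k)
    (hℓ : ℓ = X 0 + X 1 + X 2 + X 3 + X 4)
    (hf : f = (∑ m ∈ Finset.range d, (X 0 + X 1) ^ (d - 1 - m) * (-X 2) ^ m) *
      (∑ m ∈ Finset.range d, (X 3 : MvPolynomial (Fin 5) k) ^ (d - 1 - m) * (-X 4) ^ m)) :
    ℓ * f ∈ I ∧ f ∉ I ∧
    ¬ (∀ x ∈ quotPiece k I (2 * d - 2), Ideal.Quotient.mk I ℓ * x = 0 → x = 0) := by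
  replace hf : f = negGeomSum (X 0 + X 1) (X 2) d * negGeomSum (X 3) (X 4) d := hf
  have hX01 : (X 0 + X 1 : MvPolynomial (Fin 5) k) ^ d ∈ I := hI ▸ Ideal.mem_sup_left
    (Ideal.pow_mem_pow (Ideal.add_mem _ (Ideal.subset_span (by simp))
      (Ideal.subset_span (by simp))) d)
  have hX : ∀ p ∈ ({X 2 ^ d, X 3 ^ d, X 4 ^ d} : Set (MvPolynomial (Fin 5) k)), p ∈ I :=
    fun p hp => hI ▸ Ideal.mem_sup_right (Ideal.subset_span hp)
  have hℓf : ℓ * f ∈ I := by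
    rw [hℓ, hf, show (X 0 + X 1 + X 2 + X 3 + X 4 : MvPolynomial (Fin 5) k) =
      (X 0 + X 1 + X 2) + (X 3 + X 4) by ring]
    refine Ideal.add_mul_mul_mem ?_ ?_ <;> rw [add_mul_negGeomSum]
    · exact Ideal.pow_sub_neg_pow_mem hX01 (hX _ (by simp))
    · exact Ideal.pow_sub_neg_pow_mem (hX _ (by simp)) (hX _ (by simp))
  have hfI : f ∉ I := by
    intro h
    have h' := span_X_pow_le_comap_aeval (R := k) (by omega : d ≠ 0) (hI ▸ h)
    rw [Ideal.mem_comap, hf, map_mul, map_negGeomSum, map_negGeomSum] at h'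
    simp [negGeomSum_zero_right _ (by omega : 0 < d)] at h'
    exact X_pow_mul_X_pow_notMem_span_X_pow_pair (by decide) (by omega) (by omega) h'
  have hhom : f.IsHomogeneous (2 * d - 2) := by
    rw [hf, show 2 * d - 2 = 1 * (d - 1) + 1 * (d - 1) by omega]
    exact (((isHomogeneous_X k 0).add (isHomogeneous_X k 1)).negGeomSum
      (isHomogeneous_X k 2) d).mul ((isHomogeneous_X k 3).negGeomSum (isHomogeneous_X k 4) d)
  refine ⟨hℓf, hfI, fun hinj => hfI ?_⟩
  rw [← Ideal.Quotient.eq_zero_iff_mem]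
  exact hinj _ ⟨f, hhom, rfl⟩ (by rw [← map_mul, Ideal.Quotient.eq_zero_iff_mem]; exact hℓf)

/-- For `I = (x_1,x_2)^d + (x_3^d, x_4^d, x_5^d)` over a field of characteristic
zero and `d ≥ 3`, with `ℓ` the sum of the variables and
`f = ((x_1+x_2)^d - (-x_3)^d)/(x_1+x_2+x_3) · (x_4^d - (-x_5)^d)/(x_4+x_5)`,
we have `ℓ·f ∈ I` and `f ∉ I`; hence `·ℓ : A_{2d-2} → A_{2d-1}` is not injective. -/
theorem stmt17 (k : Type*) [Field k] [CharZero k] (d : ℕ) (hd : 3 ≤ d)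
    (I : Ideal (MvPolynomial (Fin 5) k))
    (hI : I = (Ideal.span {X 0, X 1}) ^ d +
      Ideal.span {(X 2 : MvPolynomial (Fin 5) k) ^ d, (X 3 : MvPolynomial (Fin 5) k) ^ d,
        (X 4 : MvPolynomial (Fin 5) k) ^ d})
    (ℓ f : MvPolynomial (Fin 5) k)
    (hℓ : ℓ = X 0 + X 1 + X 2 + X 3 + X 4)
    (hf : f = (∑ m ∈ Finset.range d, (X 0 + X 1) ^ (d - 1 - m) * (-X 2) ^ m) *
      (∑ m ∈ Finset.range d, (X 3 : MvPolynomial (Fin 5) k) ^ (d - 1 - m) * (-X 4) ^ m)) :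
    ℓ * f ∈ I ∧ f ∉ I ∧
    ¬ (∀ x ∈ quotPiece k I (2 * d - 2), Ideal.Quotient.mk I ℓ * x = 0 → x = 0) :=
  stmt17_general k d hd I hI ℓ f hℓ hf
end

section
/- Let k be a field of characteristic zero, d ≥ 3 an integer, write d = 3q + r with 0 ≤ r ≤ 2, and consider F = (X_1 − X_2)^{d−1} (X_3 − X_4)^{q} (X_4 − X_5)^{q} (X_5 − X_3)^{q+r} in k[X_1,…,X_5], a homogeneous polynomial of degree 2d−1. Then: (1) for every monomial generator g of I = (x_1, x_2)^d + (x_3^d, x_4^d, x_5^d), the constant-coefficient differential operator g(∂/∂X_1, …, ∂/∂X_5) annihilates F, i.e., F lies in the inverse system (I^{−1})_{2d−1}; and (2) (∂/∂X_1 + ∂/∂X_2 + ∂/∂X_3 + ∂/∂X_4 + ∂/∂X_5) F = 0. -/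
/-!
Every factor of `F` is a difference `X_a - X_b`, so `F` is killed by `∑_{i ∈ s} ∂/∂X_i` whenever
`s` contains both or neither of the two variables of each factor. With all five variables this is
part (2); with `s = {1, 2}` it gives `∂_2 F = -∂_1 F`, and since the partial derivatives commute,
`∂_1^a ∂_2^{d-a} F = ±∂_1^d F`. The remaining generators are pure powers `∂_i^d`, and they kill `F`
because `F` has degree `< d` in `X_1, X_3, X_4, X_5`; for `X_3` this degree is `2q + r < 3q + r`.
-/

open MvPolynomial

section CommutingEndomorphisms

variable {R M : Type*} [Semiring R] [AddCommGroup M] [Module R M] {f g : Module.End R M}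

theorem Commute.pow_apply_eq_neg_pow_apply_of_add_apply_eq_zero (hfg : Commute f g) (n : ℕ) :
    ∀ {x : M}, f x + g x = 0 → (g ^ n) x = ((-f) ^ n) x := by
  induction n with
  | zero => simp
  | succ n ih =>
    intro x hx
    have hfx : f (f x) + g (f x) = 0 := by
      rw [← Module.End.mul_apply g, ← hfg.eq, Module.End.mul_apply, ← map_add, hx, map_zero]
    rw [pow_succ, Module.End.mul_apply, eq_neg_of_add_eq_zero_right hx, map_neg, ih hfx,
      ← map_neg, ← LinearMap.neg_apply, ← Module.End.mul_apply, ← pow_succ]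

theorem Commute.mul_pow_apply_eq_zero_of_add_apply_eq_zero (hfg : Commute f g) {x : M}
    (hx : f x + g x = 0) {n : ℕ} (hn : (f ^ n) x = 0) {a : ℕ} (ha : a ≤ n) :
    (f ^ a * g ^ (n - a)) x = 0 := by
  rw [Module.End.mul_apply, hfg.pow_apply_eq_neg_pow_apply_of_add_apply_eq_zero _ hx,
    ← Module.End.mul_apply, neg_pow, ← mul_assoc, ((Commute.neg_one_right _).pow_right _).eq,
    mul_assoc, ← pow_add, Nat.add_sub_cancel' ha, Module.End.mul_apply, hn, map_zero]

end CommutingEndomorphisms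

theorem Derivation.finset_sum_apply {R A M ι : Type*} [CommSemiring R] [CommSemiring A]
    [Algebra R A] [AddCommMonoid M] [Module A M] [Module R M] (s : Finset ι)
    (D : ι → Derivation R A M) (a : A) : (∑ i ∈ s, D i) a = ∑ i ∈ s, D i a := by
  change coeFnAddMonoidHom (∑ i ∈ s, D i) a = _
  rw [map_sum, Finset.sum_apply]
  rfl

namespace MvPolynomial

variable {σ R : Type*} [CommRing R]

theorem commute_pderiv (i j : σ) :
    Commute (pderiv (R := R) i).toLinearMap (pderiv j).toLinearMap := by
  classical
  have hbracket : ⁅pderiv i, pderiv j⁆ = (0 : Derivation R (MvPolynomial σ R) _) :=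
    derivation_ext fun n => by
      rw [Derivation.commutator_apply, pderiv_X, pderiv_X, Pi.single_apply, Pi.single_apply]
      split_ifs <;> simp
  refine LinearMap.ext fun p => ?_
  simpa [Derivation.commutator_apply, sub_eq_zero] using DFunLike.congr_fun hbracket p

theorem iterate_pderiv_eq_zero_of_degreeOf_lt (i : σ) {p : MvPolynomial σ R} {n : ℕ}
    (h : degreeOf i p < n) : (pderiv i)^[n] p = 0 := by
  suffices ∀ n (p : MvPolynomial σ R), (∀ m ∈ p.support, m i < n) → (pderiv i)^[n] p = 0 from
    this n p fun m hm => (monomial_le_degreeOf i hm).trans_lt h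
  intro n
  induction n with
  | zero =>
    intro p hp
    simpa [support_eq_empty] using
      Finset.eq_empty_of_forall_notMem fun m hm => Nat.not_lt_zero _ (hp m hm)
  | succ n ih =>
    intro p hp
    refine ih _ fun m hm => ?_
    rw [mem_support_iff, coeff_pderiv] at hm
    have := hp _ (mem_support_iff.mpr (left_ne_zero_of_mul hm))
    simp only [Finsupp.coe_add, Pi.add_apply, Finsupp.single_eq_same] at this
    omega

theorem sum_pderiv_X [DecidableEq σ] (s : Finset σ) (a : σ) :
    (∑ i ∈ s, pderiv i) (X a : MvPolynomial σ R) = if a ∈ s then 1 else 0 := by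
  simp [Derivation.finset_sum_apply, pderiv_X, Pi.single_apply]

theorem sum_pderiv_X_sub_X_pow {s : Finset σ} {a b : σ} (h : a ∈ s ↔ b ∈ s) (n : ℕ) :
    (∑ i ∈ s, pderiv i) ((X a - X b : MvPolynomial σ R) ^ n) = 0 := by
  classical
  simp [Derivation.leibniz_pow, sum_pderiv_X, h]

theorem degreeOf_X_sub_X_pow_le [DecidableEq σ] [Nontrivial R] (i a b : σ) (n : ℕ) :
    degreeOf i ((X a - X b : MvPolynomial σ R) ^ n) ≤ if i = a ∨ i = b then n else 0 := by
  have h := (degreeOf_pow_le i (X a - X b : MvPolynomial σ R) n).trans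
    (Nat.mul_le_mul_left n (degreeOf_sub_le i _ _))
  rw [degreeOf_X, degreeOf_X] at h
  split_ifs at h ⊢ <;> simp_all

end MvPolynomial

theorem stmt19_general (k : Type*) [Field k] (d q r : ℕ) (hd : 3 ≤ d)
    (hqr : d = 3 * q + r) (hr : r ≤ 2)
    (F : MvPolynomial (Fin 5) k)
    (hF : F = (X 0 - X 1) ^ (d - 1) * (X 2 - X 3) ^ q * (X 3 - X 4) ^ q *
      (X 4 - X 2) ^ (q + r)) :
    (∀ a : ℕ, a ≤ d →
      (fun p => pderiv (0 : Fin 5) p)^[a] ((fun p => pderiv (1 : Fin 5) p)^[d - a] F) = 0) ∧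
    (fun p => pderiv (2 : Fin 5) p)^[d] F = 0 ∧
    (fun p => pderiv (3 : Fin 5) p)^[d] F = 0 ∧
    (fun p => pderiv (4 : Fin 5) p)^[d] F = 0 ∧
    pderiv (0 : Fin 5) F + pderiv 1 F + pderiv 2 F + pderiv 3 F + pderiv 4 F = 0 := by
  have hF_ker (s : Finset (Fin 5)) (h01 : 0 ∈ s ↔ 1 ∈ s) (h23 : 2 ∈ s ↔ 3 ∈ s)
      (h34 : 3 ∈ s ↔ 4 ∈ s) : (∑ i ∈ s, pderiv i) F = 0 := by
    simp only [hF, Derivation.leibniz, sum_pderiv_X_sub_X_pow h01, sum_pderiv_X_sub_X_pow h23,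
      sum_pderiv_X_sub_X_pow h34, sum_pderiv_X_sub_X_pow (h23.trans h34).symm, smul_zero, add_zero]
  have hF_deg (i : Fin 5) : degreeOf i F ≤ (if i = 0 ∨ i = 1 then d - 1 else 0) +
      (if i = 2 ∨ i = 3 then q else 0) + (if i = 3 ∨ i = 4 then q else 0) +
      (if i = 4 ∨ i = 2 then q + r else 0) := by
    rw [hF]
    refine (degreeOf_mul_le _ _ _).trans (add_le_add ((degreeOf_mul_le _ _ _).trans
      (add_le_add ((degreeOf_mul_le _ _ _).trans (add_le_add ?_ ?_)) ?_)) ?_) <;>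
    exact degreeOf_X_sub_X_pow_le _ _ _ _
  have hF_deg_lt (i : Fin 5) (hi : i ≠ 1) : degreeOf i F < d := by
    refine (hF_deg i).trans_lt ?_
    fin_cases i <;> simp at hi ⊢ <;> omega
  refine ⟨fun a ha => ?_, iterate_pderiv_eq_zero_of_degreeOf_lt _ (hF_deg_lt 2 (by decide)),
    iterate_pderiv_eq_zero_of_degreeOf_lt _ (hF_deg_lt 3 (by decide)),
    iterate_pderiv_eq_zero_of_degreeOf_lt _ (hF_deg_lt 4 (by decide)), ?_⟩
  · have h01 : pderiv 0 F + pderiv 1 F = 0 := by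
      simpa [Derivation.finset_sum_apply] using hF_ker {0, 1} (by simp) (by simp) (by simp)
    have h0d : ((pderiv (R := k) (0 : Fin 5)).toLinearMap ^ d) F = 0 := by
      rw [Module.End.coe_pow]
      exact iterate_pderiv_eq_zero_of_degreeOf_lt _ (hF_deg_lt 0 (by decide))
    have := (commute_pderiv 0 1).mul_pow_apply_eq_zero_of_add_apply_eq_zero h01 h0d ha
    rwa [Module.End.mul_apply, Module.End.coe_pow, Module.End.coe_pow] at this
  · simpa [Derivation.finset_sum_apply, Fin.sum_univ_five] using hF_ker Finset.univ

/-- With `d = 3q + r`, `0 ≤ r ≤ 2`, the polynomial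
`F = (X_1-X_2)^{d-1}(X_3-X_4)^q (X_4-X_5)^q (X_5-X_3)^{q+r}` is annihilated by every
monomial generator of `I = (x_1,x_2)^d + (x_3^d,x_4^d,x_5^d)` acting as a
differential operator (so `F ∈ (I^{-1})_{2d-1}`), and by `∂/∂X_1 + ⋯ + ∂/∂X_5`. -/
theorem stmt19 (k : Type*) [Field k] [CharZero k] (d q r : ℕ) (hd : 3 ≤ d)
    (hqr : d = 3 * q + r) (hr : r ≤ 2)
    (F : MvPolynomial (Fin 5) k)
    (hF : F = (X 0 - X 1) ^ (d - 1) * (X 2 - X 3) ^ q * (X 3 - X 4) ^ q *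
      (X 4 - X 2) ^ (q + r)) :
    (∀ a : ℕ, a ≤ d →
      (fun p => pderiv (0 : Fin 5) p)^[a] ((fun p => pderiv (1 : Fin 5) p)^[d - a] F) = 0) ∧
    (fun p => pderiv (2 : Fin 5) p)^[d] F = 0 ∧
    (fun p => pderiv (3 : Fin 5) p)^[d] F = 0 ∧
    (fun p => pderiv (4 : Fin 5) p)^[d] F = 0 ∧
    pderiv (0 : Fin 5) F + pderiv 1 F + pderiv 2 F + pderiv 3 F + pderiv 4 F = 0 :=
  stmt19_general k d q r hd hqr hr F hF
end
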